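/- arXiv:1612.06065 — 6 statements merged into one kernel-verified Lean document; each statement's English description precedes it below -/
import Mathlib

section
/- (Scalar comparison underlying Lemma 3.2: lower bound on the smallest eigenvalue of the ensemble covariance) Let b ≥ 0, d > 0, ε > 0, and let λ : [0, ∞) → [0, ∞) be differentiable with λ′(t) ≥ −2b λ(t) + 2d − λ(t)²/ε for all t ≥ 0. Then for all t ≥ 0, λ(t) ≥ min{ λ(0), −ε b + √(ε² b² + 2 ε d) }. In particular, if λ(0) ≥ −ε b + √(ε² b² + 2 ε d), then λ(t) ≥ −ε b + √(ε² b² + 2 ε d) > 0 for all t ≥ 0, a lower bound of order ε^{1/2} as ε → 0 for fixed b, d. -/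
open scoped BigOperators
open Matrix MeasureTheory

noncomputable section

/-- Squared Euclidean norm of a vector in ℝ^n. -/
def sqNorm {n : ℕ} (v : Fin n → ℝ) : ℝ := ∑ k, (v k) ^ 2

/-- Euclidean norm of a vector in ℝ^n. -/
def evNorm {n : ℕ} (v : Fin n → ℝ) : ℝ := Real.sqrt (sqNorm v)

/-- Euclidean inner product on ℝ^n. -/
def eip {n : ℕ} (v w : Fin n → ℝ) : ℝ := ∑ k, v k * w k

/-- Empirical mean of an ensemble of M vectors in ℝ^n. -/
def empMean (M n : ℕ) (x : Fin M → Fin n → ℝ) : Fin n → ℝ := (M : ℝ)⁻¹ • ∑ i, x i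

/-- Empirical covariance matrix of an ensemble of M vectors in ℝ^n. -/
def empCov (M n : ℕ) (x : Fin M → Fin n → ℝ) : Matrix (Fin n) (Fin n) ℝ :=
  Matrix.of fun k l =>
    ((M : ℝ) - 1)⁻¹ * ∑ i, (x i k - empMean M n x k) * (x i l - empMean M n x l)

/-- Ensemble spread (l²-norm of ensemble deviations from the mean). -/
def spread (M n : ℕ) (x : Fin M → Fin n → ℝ) : ℝ :=
  ((M : ℝ) - 1)⁻¹ * ∑ i, sqNorm (x i - empMean M n x)

/-- Frobenius norm of a matrix. -/
def frobNorm {m n : ℕ} (A : Matrix (Fin m) (Fin n) ℝ) : ℝ :=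
  Real.sqrt (∑ i, ∑ j, (A i j) ^ 2)

/-! The Riccati rate `-2 b y + 2 d - y² / ε` factors as `(r₊ - y)(y - r₋) / ε` with roots
`r± = -ε b ± √(ε² b² + 2 ε d)`, so it is positive for `0 ≤ y < r₊`. Hence `λ` is increasing
whenever it lies below `m = min (λ 0) r₊`, and a barrier argument shows it can never cross
below any level `m' < m`. -/

theorem le_image_of_hasDerivAt_pos_of_lt {f f' : ℝ → ℝ} {a m t : ℝ}
    (hf : ∀ s, a ≤ s → HasDerivAt f (f' s) s) (ha : m ≤ f a)
    (hpos : ∀ s, a ≤ s → f s < m → 0 < f' s) (ht : a ≤ t) : m ≤ f t := by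
  refine le_of_forall_lt_imp_le_of_dense fun m' hm' => ?_
  have barrier : ∀ ⦃x⦄, x ∈ Set.Icc a t → -f x ≤ -m' :=
    image_le_of_deriv_right_lt_deriv_boundary (B := fun _ => -m') (B' := 0)
      (fun x hx => (hf x hx.1).neg.continuousAt.continuousWithinAt)
      (fun x hx => (hf x hx.1).neg.hasDerivWithinAt) (neg_le_neg (hm'.le.trans ha))
      (fun _ => hasDerivAt_const _ _)
      (fun x hx hfx => by
        rw [Pi.neg_apply, neg_inj] at hfx
        simpa using hpos x hx.1 (hfx ▸ hm'))
  simpa using barrier ⟨ht, le_rfl⟩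

theorem riccati_rate_eq_mul_div {b d ε : ℝ} (hε : ε ≠ 0) (hD : 0 ≤ ε ^ 2 * b ^ 2 + 2 * ε * d)
    (y : ℝ) :
    -(2 * b) * y + 2 * d - y ^ 2 / ε =
      ((-(ε * b) + √(ε ^ 2 * b ^ 2 + 2 * ε * d)) - y) *
        (y - (-(ε * b) - √(ε ^ 2 * b ^ 2 + 2 * ε * d))) / ε := by
  rw [eq_div_iff hε, sub_mul, div_mul_cancel₀ _ hε]
  linear_combination (-1) * Real.sq_sqrt hD

theorem riccati_root_pos (b : ℝ) {d ε : ℝ} (hd : 0 < d) (hε : 0 < ε) :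
    0 < -(ε * b) + √(ε ^ 2 * b ^ 2 + 2 * ε * d) := by
  have habs : |ε * b| < √(ε ^ 2 * b ^ 2 + 2 * ε * d) := by
    rw [← Real.sqrt_sq_eq_abs]
    exact Real.sqrt_lt_sqrt (sq_nonneg _) (by linarith [mul_pos hε hd])
  linarith [le_abs_self (ε * b)]

theorem riccati_rate_pos {b d ε y : ℝ} (hb : 0 ≤ b) (hd : 0 < d) (hε : 0 < ε) (hy : 0 ≤ y)
    (hyr : y < -(ε * b) + √(ε ^ 2 * b ^ 2 + 2 * ε * d)) :
    0 < -(2 * b) * y + 2 * d - y ^ 2 / ε := by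
  have hD : 0 < ε ^ 2 * b ^ 2 + 2 * ε * d := by positivity
  rw [riccati_rate_eq_mul_div hε.ne' hD.le]
  have hsqrt : 0 < √(ε ^ 2 * b ^ 2 + 2 * ε * d) := Real.sqrt_pos.mpr hD
  have hεb : 0 ≤ ε * b := mul_nonneg hε.le hb
  exact div_pos (mul_pos (by linarith) (by linarith)) hε

/-- Scalar comparison underlying Lemma 3.2: lower bound on the smallest eigenvalue
of the ensemble covariance. -/
theorem eigenvalue_lower_comparison (b d ε : ℝ) (hb : 0 ≤ b) (hd : 0 < d) (hε : 0 < ε)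
    (lam lam' : ℝ → ℝ)
    (hnonneg : ∀ t : ℝ, 0 ≤ t → 0 ≤ lam t)
    (hderiv : ∀ t : ℝ, 0 ≤ t → HasDerivAt lam (lam' t) t)
    (hineq : ∀ t : ℝ, 0 ≤ t →
      -(2 * b) * lam t + 2 * d - (lam t) ^ 2 / ε ≤ lam' t) :
    (∀ t : ℝ, 0 ≤ t →
        min (lam 0) (-(ε * b) + Real.sqrt (ε ^ 2 * b ^ 2 + 2 * ε * d)) ≤ lam t) ∧
      (-(ε * b) + Real.sqrt (ε ^ 2 * b ^ 2 + 2 * ε * d) ≤ lam 0 →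
        (∀ t : ℝ, 0 ≤ t →
            -(ε * b) + Real.sqrt (ε ^ 2 * b ^ 2 + 2 * ε * d) ≤ lam t) ∧
          0 < -(ε * b) + Real.sqrt (ε ^ 2 * b ^ 2 + 2 * ε * d)) := by
  set r := -(ε * b) + √(ε ^ 2 * b ^ 2 + 2 * ε * d)
  have lower : ∀ t, 0 ≤ t → min (lam 0) r ≤ lam t := fun t ht =>
    le_image_of_hasDerivAt_pos_of_lt hderiv (min_le_left _ _)
      (fun s hs hlt => (riccati_rate_pos hb hd hε (hnonneg s hs)
        (hlt.trans_le (min_le_right _ _))).trans_le (hineq s hs)) ht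
  refine ⟨lower, fun h0 => ⟨fun t ht => ?_, riccati_root_pos b hd hε⟩⟩
  simpa [min_eq_right h0] using lower t ht

end
end

section
/- (Deterministic pathwise convolution estimate from Section 3) Let α > 0, K ∈ ℝ, T > 0. Let m : [0, T] → ℝ be continuous with m(0) = 0, let g : [0, T] → ℝ be Lebesgue integrable, and let E : [0, T] → ℝ satisfy E(t) = E(0) + ∫_0^t g(s) ds + m(t) for all t ∈ [0, T] and g(t) ≤ K − α E(t) for almost every t ∈ [0, T]. Then for every t ∈ [0, T], E(t) ≤ e^{−αt} E(0) + (K/α)(1 − e^{−αt}) + e^{−αt} m(t) + α ∫_0^t e^{−α(t−s)} ( m(t) − m(s) ) ds. -/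
open scoped BigOperators
open Matrix MeasureTheory

noncomputable section

private lemma hasDerivAt_expa (α s : ℝ) :
    HasDerivAt (fun x => Real.exp (α * x)) (α * Real.exp (α * s)) s := by
  simpa [mul_comm, Function.comp_def] using ((Real.hasDerivAt_exp (α * s)).comp s ((hasDerivAt_id s).const_mul α))

private lemma integral_a_exp (α u v : ℝ) :
    ∫ s in u..v, α * Real.exp (α * s) = Real.exp (α * v) - Real.exp (α * u) :=
  intervalIntegral.integral_eq_sub_of_hasDerivAt (fun s _ => hasDerivAt_expa α s)
    ((continuous_const.mul (Real.continuous_exp.comp (continuous_const.mul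
      continuous_id))).intervalIntegrable u v)

private lemma fubini_key (α t : ℝ) (g : ℝ → ℝ) (ht : 0 ≤ t)
    (hg : IntegrableOn g (Set.Ioc 0 t)) :
    ∫ s in Set.Ioc (0:ℝ) t, α * Real.exp (α * s) * (∫ u in Set.Ioc (0:ℝ) s, g u) =
    ∫ u in Set.Ioc (0:ℝ) t, (Real.exp (α * t) - Real.exp (α * u)) * g u := by
  have hS : MeasurableSet {p : ℝ × ℝ | p.2 ≤ p.1} := measurableSet_le measurable_snd measurable_fst
  have hcont : Continuous fun s : ℝ => α * Real.exp (α * s) :=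
    continuous_const.mul (Real.continuous_exp.comp (continuous_const.mul continuous_id))
  have hq : Integrable (fun p : ℝ × ℝ => (α * Real.exp (α * p.1)) * g p.2)
      ((volume.restrict (Set.Ioc (0:ℝ) t)).prod (volume.restrict (Set.Ioc (0:ℝ) t))) :=
    Integrable.mul_prod hcont.integrableOn_Ioc hg
  have hf : Integrable (Function.uncurry fun s u =>
      ({p : ℝ × ℝ | p.2 ≤ p.1}.indicator (fun p => (α * Real.exp (α * p.1)) * g p.2) (s, u)))
      ((volume.restrict (Set.Ioc (0:ℝ) t)).prod (volume.restrict (Set.Ioc (0:ℝ) t))) :=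
    hq.indicator hS
  have hswap := integral_integral_swap hf
  have hL : (∫ s in Set.Ioc (0:ℝ) t, (∫ u in Set.Ioc (0:ℝ) t,
        ({p : ℝ × ℝ | p.2 ≤ p.1}.indicator (fun p => (α * Real.exp (α * p.1)) * g p.2) (s, u))))
      = ∫ s in Set.Ioc (0:ℝ) t, α * Real.exp (α * s) * (∫ u in Set.Ioc (0:ℝ) s, g u) := by
    apply setIntegral_congr_fun measurableSet_Ioc
    intro s hs
    dsimp only
    have h1 : (fun u => ({p : ℝ × ℝ | p.2 ≤ p.1}.indicator
          (fun p => (α * Real.exp (α * p.1)) * g p.2) (s, u)))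
        = (Set.Iic s).indicator (fun u => (α * Real.exp (α * s)) * g u) := by
      funext u; simp [Set.indicator_apply]
    have h2 : Set.Iic s ∩ Set.Ioc 0 t = Set.Ioc 0 s := by
      ext u
      simp only [Set.mem_inter_iff, Set.mem_Iic, Set.mem_Ioc]
      exact ⟨fun h => ⟨h.2.1, h.1⟩, fun h => ⟨h.2, h.1, h.2.trans hs.2⟩⟩
    rw [h1, integral_indicator measurableSet_Iic, Measure.restrict_restrict measurableSet_Iic,
      h2, integral_const_mul]
  have hR : (∫ u in Set.Ioc (0:ℝ) t, (∫ s in Set.Ioc (0:ℝ) t,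
        ({p : ℝ × ℝ | p.2 ≤ p.1}.indicator (fun p => (α * Real.exp (α * p.1)) * g p.2) (s, u))))
      = ∫ u in Set.Ioc (0:ℝ) t, (Real.exp (α * t) - Real.exp (α * u)) * g u := by
    apply setIntegral_congr_fun measurableSet_Ioc
    intro u hu
    dsimp only
    have h1 : (fun s => ({p : ℝ × ℝ | p.2 ≤ p.1}.indicator
          (fun p => (α * Real.exp (α * p.1)) * g p.2) (s, u)))
        = (Set.Ici u).indicator (fun s => (α * Real.exp (α * s)) * g u) := by
      funext s; simp [Set.indicator_apply]
    have h2 : Set.Ici u ∩ Set.Ioc 0 t = Set.Icc u t := by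
      ext s
      simp only [Set.mem_inter_iff, Set.mem_Ici, Set.mem_Ioc, Set.mem_Icc]
      exact ⟨fun h => ⟨h.1, h.2.2⟩, fun h => ⟨h.1, hu.1.trans_le h.1, h.2⟩⟩
    rw [h1, integral_indicator measurableSet_Ici, Measure.restrict_restrict measurableSet_Ici,
      h2, integral_Icc_eq_integral_Ioc, ← intervalIntegral.integral_of_le hu.2,
      intervalIntegral.integral_mul_const, integral_a_exp]
  rw [← hL, ← hR]
  exact hswap

/-- Deterministic pathwise convolution estimate from Section 3. -/
theorem pathwise_convolution_estimate (α K T : ℝ) (hα : 0 < α) (hT : 0 < T)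
    (m g E : ℝ → ℝ)
    (hm_cont : ContinuousOn m (Set.Icc 0 T)) (hm0 : m 0 = 0)
    (hg_int : IntegrableOn g (Set.Icc 0 T))
    (hE : ∀ t ∈ Set.Icc (0 : ℝ) T, E t = E 0 + (∫ s in (0 : ℝ)..t, g s) + m t)
    (hg_le : ∀ᵐ t ∂(volume.restrict (Set.Icc (0 : ℝ) T)), g t ≤ K - α * E t) :
    ∀ t ∈ Set.Icc (0 : ℝ) T,
      E t ≤ Real.exp (-α * t) * E 0 + (K / α) * (1 - Real.exp (-α * t)) +
          Real.exp (-α * t) * m t +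
          α * ∫ s in (0 : ℝ)..t, Real.exp (-α * (t - s)) * (m t - m s) := by
  intro t ht
  obtain ⟨ht0, htT⟩ := ht
  have hsub : Set.Ioc (0:ℝ) t ⊆ Set.Icc 0 T := fun s hs => ⟨hs.1.le, hs.2.trans htT⟩
  have hsub' : Set.Icc (0:ℝ) t ⊆ Set.Icc 0 T := Set.Icc_subset_Icc le_rfl htT
  have hgI : IntegrableOn g (Set.Ioc 0 t) := hg_int.mono_set hsub
  have hgIcc : IntegrableOn g (Set.Icc 0 t) := hg_int.mono_set hsub'
  have hm_t : ContinuousOn m (Set.Icc 0 t) := hm_cont.mono hsub'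
  have expcont : Continuous fun s : ℝ => Real.exp (α * s) :=
    Real.continuous_exp.comp (continuous_const.mul continuous_id)
  have hGcont : ContinuousOn (fun x => ∫ u in Set.Ioc (0:ℝ) x, g u) (Set.Icc 0 t) :=
    intervalIntegral.continuousOn_primitive hgIcc
  -- integrabilities
  have hInt1a : IntegrableOn (fun s => Real.exp (α * s) * g s) (Set.Ioc 0 t) := by
    apply Integrable.mono' (hgI.norm.const_mul (Real.exp (α * t)))
    · exact expcont.aestronglyMeasurable.mul hgI.aestronglyMeasurable
    · filter_upwards [ae_restrict_mem measurableSet_Ioc] with s hs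
      rw [Real.norm_eq_abs, abs_mul, abs_of_pos (Real.exp_pos _)]
      exact mul_le_mul_of_nonneg_right
        (Real.exp_le_exp.2 (mul_le_mul_of_nonneg_left hs.2 hα.le)) (abs_nonneg _)
  have hInt1b : IntegrableOn
      (fun s => α * Real.exp (α * s) * (E 0 + ∫ u in Set.Ioc (0:ℝ) s, g u)) (Set.Ioc 0 t) :=
    (((continuous_const.mul expcont).continuousOn).mul
      (continuousOn_const.add hGcont)).integrableOn_Icc.mono_set Set.Ioc_subset_Icc_self
  have hInt3 : IntegrableOn (fun s => Real.exp (α * s) * (K - α * m s)) (Set.Ioc 0 t) :=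
    (expcont.continuousOn.mul
      (continuousOn_const.sub (continuousOn_const.mul hm_t))).integrableOn_Icc.mono_set
      Set.Ioc_subset_Icc_self
  have int_b1 : IntegrableOn (fun s => α * Real.exp (α * s) * E 0) (Set.Ioc 0 t) :=
    ((continuous_const.mul expcont).mul continuous_const).integrableOn_Ioc
  have int_b2 : IntegrableOn
      (fun s => α * Real.exp (α * s) * ∫ u in Set.Ioc (0:ℝ) s, g u) (Set.Ioc 0 t) :=
    (((continuous_const.mul expcont).continuousOn).mul hGcont).integrableOn_Icc.mono_set
      Set.Ioc_subset_Icc_self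
  have intK : IntegrableOn (fun s => Real.exp (α * s) * K) (Set.Ioc 0 t) :=
    (expcont.mul continuous_const).integrableOn_Ioc
  have intM : IntegrableOn (fun s => Real.exp (α * s) * (α * m s)) (Set.Ioc 0 t) :=
    (expcont.continuousOn.mul (continuousOn_const.mul hm_t)).integrableOn_Icc.mono_set
      Set.Ioc_subset_Icc_self
  -- a.e. inequality
  have h_ae : ∀ᵐ s ∂(volume.restrict (Set.Ioc (0:ℝ) t)),
      Real.exp (α * s) * g s + α * Real.exp (α * s) * (E 0 + ∫ u in Set.Ioc (0:ℝ) s, g u)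
        ≤ Real.exp (α * s) * (K - α * m s) := by
    filter_upwards [ae_restrict_of_ae_restrict_of_subset hsub hg_le,
      ae_restrict_mem measurableSet_Ioc] with s h1 h2
    have hEs : E s = E 0 + (∫ u in Set.Ioc (0:ℝ) s, g u) + m s := by
      rw [hE s (hsub h2), intervalIntegral.integral_of_le h2.1.le]
    rw [hEs] at h1
    have h3 := mul_le_mul_of_nonneg_left h1 (Real.exp_pos (α * s)).le
    nlinarith [h3]
  have hmono := integral_mono_ae (hInt1a.add hInt1b) hInt3 h_ae
  -- compute the pieces
  have e1 : (∫ s in Set.Ioc (0:ℝ) t, (Real.exp (α * s) * g s +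
        α * Real.exp (α * s) * (E 0 + ∫ u in Set.Ioc (0:ℝ) s, g u)))
      = (∫ s in Set.Ioc (0:ℝ) t, Real.exp (α * s) * g s) +
        ∫ s in Set.Ioc (0:ℝ) t, α * Real.exp (α * s) * (E 0 + ∫ u in Set.Ioc (0:ℝ) s, g u) :=
    integral_add hInt1a hInt1b
  have e2 : (∫ s in Set.Ioc (0:ℝ) t, α * Real.exp (α * s) * (E 0 + ∫ u in Set.Ioc (0:ℝ) s, g u))
      = (∫ s in Set.Ioc (0:ℝ) t, α * Real.exp (α * s) * E 0) +
        ∫ s in Set.Ioc (0:ℝ) t, α * Real.exp (α * s) * ∫ u in Set.Ioc (0:ℝ) s, g u := by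
    rw [← integral_add int_b1 int_b2]
    simp only [mul_add]
  have e3 : (∫ s in Set.Ioc (0:ℝ) t, α * Real.exp (α * s) * E 0)
      = (Real.exp (α * t) - 1) * E 0 := by
    rw [← intervalIntegral.integral_of_le ht0, intervalIntegral.integral_mul_const,
      integral_a_exp]
    simp
  have e4 : (∫ s in Set.Ioc (0:ℝ) t, α * Real.exp (α * s) * ∫ u in Set.Ioc (0:ℝ) s, g u)
      = Real.exp (α * t) * (∫ u in Set.Ioc (0:ℝ) t, g u) -
        ∫ u in Set.Ioc (0:ℝ) t, Real.exp (α * u) * g u := by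
    rw [fubini_key α t g ht0 hgI]
    simp only [sub_mul]
    rw [integral_sub (hgI.const_mul _) hInt1a, integral_const_mul]
  have hexpint : (∫ s in (0:ℝ)..t, Real.exp (α * s)) = (Real.exp (α * t) - 1) / α := by
    have h := integral_a_exp α 0 t
    rw [intervalIntegral.integral_const_mul] at h
    rw [mul_zero, Real.exp_zero] at h
    rw [eq_div_iff hα.ne']
    linarith [h]
  have e5 : (∫ s in Set.Ioc (0:ℝ) t, Real.exp (α * s) * (K - α * m s))
      = K / α * (Real.exp (α * t) - 1) -
        α * ∫ s in Set.Ioc (0:ℝ) t, Real.exp (α * s) * m s := by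
    simp only [mul_sub]
    rw [integral_sub intK intM]
    have c1 : (∫ s in Set.Ioc (0:ℝ) t, Real.exp (α * s) * K)
        = (Real.exp (α * t) - 1) / α * K := by
      rw [← intervalIntegral.integral_of_le ht0, intervalIntegral.integral_mul_const, hexpint]
    have c2 : (∫ s in Set.Ioc (0:ℝ) t, Real.exp (α * s) * (α * m s))
        = α * ∫ s in Set.Ioc (0:ℝ) t, Real.exp (α * s) * m s := by
      rw [show (fun s => Real.exp (α * s) * (α * m s))
          = fun s => α * (Real.exp (α * s) * m s) from funext fun s => by ring,
        integral_const_mul]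
    rw [c1, c2]
    field_simp
  simp only [Pi.add_apply] at hmono
  rw [e1, e2, e3, e4, e5] at hmono
  have hEt : E t = E 0 + (∫ u in Set.Ioc (0:ℝ) t, g u) + m t := by
    rw [hE t ⟨ht0, htT⟩, intervalIntegral.integral_of_le ht0]
  set a := Real.exp (α * t) with ha
  set b := Real.exp (-α * t) with hb
  set J := ∫ s in Set.Ioc (0:ℝ) t, Real.exp (α * s) * m s with hJdef
  set Gt := ∫ u in Set.Ioc (0:ℝ) t, g u with hGt
  have hba : b * a = 1 := by
    rw [ha, hb, ← Real.exp_add]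
    norm_num
  have hbpos : 0 < b := Real.exp_pos _
  have key : a * (E 0 + Gt) ≤ E 0 + K / α * (a - 1) - α * J := by nlinarith [hmono]
  -- rewrite the convolution integral
  have hmcont2 : ContinuousOn (fun s => Real.exp (α * s) * m s) (Set.Icc 0 t) :=
    expcont.continuousOn.mul hm_t
  have i1 : IntervalIntegrable (fun s => b * (Real.exp (α * s) * m t)) volume 0 t :=
    (continuous_const.mul (expcont.mul continuous_const)).intervalIntegrable 0 t
  have i2 : IntervalIntegrable (fun s => b * (Real.exp (α * s) * m s)) volume 0 t := by
    apply ContinuousOn.intervalIntegrable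
    rw [Set.uIcc_of_le ht0]
    exact continuousOn_const.mul hmcont2
  have hJ : (∫ s in (0:ℝ)..t, Real.exp (-α * (t - s)) * (m t - m s))
      = b * ((a - 1) / α * m t - J) := by
    rw [show (fun s => Real.exp (-α * (t - s)) * (m t - m s))
        = fun s => b * (Real.exp (α * s) * m t) - b * (Real.exp (α * s) * m s) from
        funext fun s => by
          rw [hb, show -α * (t - s) = -α * t + α * s by ring, Real.exp_add]; ring,
      intervalIntegral.integral_sub i1 i2, intervalIntegral.integral_const_mul,
      intervalIntegral.integral_const_mul, intervalIntegral.integral_mul_const, hexpint,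
      intervalIntegral.integral_of_le ht0, ← hJdef]
    ring
  rw [hEt, hJ]
  have h1 : b * (a * (E 0 + Gt)) = E 0 + Gt := by linear_combination (E 0 + Gt) * hba
  have h4 : b * (E 0 + K / α * (a - 1) - α * J)
      = b * E 0 + K / α * (1 - b) - α * (b * J) := by linear_combination (K / α) * hba
  have h3 : α * (b * ((a - 1) / α * m t - J)) = m t * (1 - b) - α * (b * J) := by
    field_simp
    linear_combination m t * hba
  have hm5 := mul_le_mul_of_nonneg_left key hbpos.le
  rw [h1, h4] at hm5
  rw [h3]
  nlinarith [hm5]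


end
end

section
/- Let f : ℝ^n → ℝ^n be globally Lipschitz continuous with Lipschitz constant L_f, and let L_+ ∈ ℝ satisfy ⟨f(x) − f(y), x − y⟩ ≤ L_+ ‖x − y‖² for all x, y ∈ ℝ^n. Then for any ensemble of M ≥ 2 vectors x^1, …, x^M ∈ ℝ^n with empirical mean x̄ and ensemble spread V, setting f̄ = (1/M) Σ_{i=1}^M f(x^i), and for any z ∈ ℝ^n with E = ‖z − x̄‖²/2, one has ⟨f(z) − f̄, z − x̄⟩ ≤ 2 L_+ E + √2 L_f V^{1/2} E^{1/2}. -/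
open scoped BigOperators
open Matrix MeasureTheory

noncomputable section

/-!
Split at the ensemble mean `x̄`: `f z - f̄ = (f z - f x̄) + (f x̄ - f̄)`. Paired with `z - x̄`, the
first part contributes at most `L₊ ‖z - x̄‖²` by the one-sided Lipschitz condition. The second part
is the average of `f x̄ - f xⁱ`, so its norm is at most `L_f` times the mean deviation
`M⁻¹ ∑ ‖xⁱ - x̄‖`, which by Cauchy–Schwarz is at most `√(M⁻¹ ∑ ‖xⁱ - x̄‖²) ≤ √V`.
Finally `‖z - x̄‖ = √2 · √E`.
-/

open scoped RealInnerProductSpace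

section Ensemble

variable {ι : Type*} [Fintype ι] [Nonempty ι]

lemma norm_sub_average_le {F : Type*} [SeminormedAddCommGroup F] [NormedSpace ℝ F]
    (a : F) (g : ι → F) :
    ‖a - (Fintype.card ι : ℝ)⁻¹ • ∑ i, g i‖ ≤ (Fintype.card ι : ℝ)⁻¹ * ∑ i, ‖a - g i‖ := by
  have hcard : (Fintype.card ι : ℝ) ≠ 0 := Nat.cast_ne_zero.mpr Fintype.card_ne_zero
  have hdev : a - (Fintype.card ι : ℝ)⁻¹ • ∑ i, g i =
      (Fintype.card ι : ℝ)⁻¹ • ∑ i, (a - g i) := by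
    rw [Finset.sum_sub_distrib, smul_sub, Finset.sum_const, Finset.card_univ,
      ← Nat.cast_smul_eq_nsmul ℝ, inv_smul_smul₀ hcard]
  rw [hdev, norm_smul, Real.norm_of_nonneg (by positivity)]
  gcongr
  exact norm_sum_le _ _

lemma average_le_sqrt_average_sq (a : ι → ℝ) :
    (Fintype.card ι : ℝ)⁻¹ * ∑ i, a i ≤ √((Fintype.card ι : ℝ)⁻¹ * ∑ i, a i ^ 2) := by
  have hcard : (0 : ℝ) < Fintype.card ι := Nat.cast_pos.mpr Fintype.card_pos
  refine Real.le_sqrt_of_sq_le ?_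
  have := sq_sum_le_card_mul_sum_sq (s := Finset.univ) (f := a)
  rw [Finset.card_univ] at this
  calc ((Fintype.card ι : ℝ)⁻¹ * ∑ i, a i) ^ 2
      = (Fintype.card ι : ℝ)⁻¹ ^ 2 * (∑ i, a i) ^ 2 := mul_pow _ _ _
    _ ≤ (Fintype.card ι : ℝ)⁻¹ ^ 2 * (Fintype.card ι * ∑ i, a i ^ 2) := by gcongr
    _ = (Fintype.card ι : ℝ)⁻¹ * ∑ i, a i ^ 2 := by field_simp

variable {E : Type*} [NormedAddCommGroup E] [InnerProductSpace ℝ E]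

theorem inner_sub_average_le {f : E → E} {Lf Lp : ℝ}
    (hf : ∀ x y, ‖f x - f y‖ ≤ Lf * ‖x - y‖) (hLp : ∀ x y, ⟪f x - f y, x - y⟫ ≤ Lp * ‖x - y‖ ^ 2)
    (x : ι → E) (z m : E) :
    ⟪f z - (Fintype.card ι : ℝ)⁻¹ • ∑ i, f (x i), z - m⟫ ≤
      Lp * ‖z - m‖ ^ 2 + Lf * ((Fintype.card ι : ℝ)⁻¹ * ∑ i, ‖x i - m‖) * ‖z - m‖ := by
  have hmean : ‖f m - (Fintype.card ι : ℝ)⁻¹ • ∑ i, f (x i)‖ ≤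
      Lf * ((Fintype.card ι : ℝ)⁻¹ * ∑ i, ‖x i - m‖) :=
    calc _ ≤ (Fintype.card ι : ℝ)⁻¹ * ∑ i, ‖f m - f (x i)‖ := norm_sub_average_le _ _
      _ ≤ (Fintype.card ι : ℝ)⁻¹ * ∑ i, Lf * ‖x i - m‖ := by
        gcongr with i
        rw [norm_sub_rev (x i)]
        exact hf _ _
      _ = _ := by rw [← Finset.mul_sum]; ring
  calc ⟪f z - (Fintype.card ι : ℝ)⁻¹ • ∑ i, f (x i), z - m⟫
      = ⟪f z - f m, z - m⟫ + ⟪f m - (Fintype.card ι : ℝ)⁻¹ • ∑ i, f (x i), z - m⟫ := by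
        rw [← inner_add_left, sub_add_sub_cancel]
    _ ≤ Lp * ‖z - m‖ ^ 2 + ‖f m - (Fintype.card ι : ℝ)⁻¹ • ∑ i, f (x i)‖ * ‖z - m‖ :=
        add_le_add (hLp z m) (real_inner_le_norm _ _)
    _ ≤ _ := by gcongr

end Ensemble

section EuclideanCoordinates

variable {n : ℕ}

lemma sqNorm_eq_norm_sq (v : Fin n → ℝ) : sqNorm v = ‖WithLp.toLp 2 v‖ ^ 2 := by
  rw [EuclideanSpace.real_norm_sq_eq]
  rfl

lemma evNorm_eq_norm (v : Fin n → ℝ) : evNorm v = ‖WithLp.toLp 2 v‖ := by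
  rw [evNorm, sqNorm_eq_norm_sq, Real.sqrt_sq (norm_nonneg _)]

lemma eip_eq_inner (v w : Fin n → ℝ) : eip v w = ⟪WithLp.toLp 2 v, WithLp.toLp 2 w⟫ := by
  simp only [eip, PiLp.inner_apply, RCLike.inner_apply, conj_trivial]
  exact Finset.sum_congr rfl fun k _ => mul_comm _ _

variable {ι : Type*} [Fintype ι] [Nonempty ι]

lemma eip_sub_average_le {f : (Fin n → ℝ) → Fin n → ℝ} {Lf Lp : ℝ}
    (hf : ∀ x y, evNorm (f x - f y) ≤ Lf * evNorm (x - y))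
    (hLp : ∀ x y, eip (f x - f y) (x - y) ≤ Lp * sqNorm (x - y))
    (x : ι → Fin n → ℝ) (z m : Fin n → ℝ) :
    eip (f z - (Fintype.card ι : ℝ)⁻¹ • ∑ i, f (x i)) (z - m) ≤
      Lp * sqNorm (z - m) +
        Lf * ((Fintype.card ι : ℝ)⁻¹ * ∑ i, evNorm (x i - m)) * evNorm (z - m) := by
  let F : EuclideanSpace ℝ (Fin n) → EuclideanSpace ℝ (Fin n) := fun v ↦ WithLp.toLp 2 (f v.ofLp)
  have hF : ∀ v w, ‖F v - F w‖ ≤ Lf * ‖v - w‖ := fun v w ↦ by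
    simpa [evNorm_eq_norm] using hf v.ofLp w.ofLp
  have hLpF : ∀ v w, ⟪F v - F w, v - w⟫ ≤ Lp * ‖v - w‖ ^ 2 := fun v w ↦ by
    simpa [eip_eq_inner, sqNorm_eq_norm_sq] using hLp v.ofLp w.ofLp
  simpa [F, eip_eq_inner, sqNorm_eq_norm_sq, evNorm_eq_norm, WithLp.toLp_sum] using
    inner_sub_average_le hF hLpF (fun i ↦ WithLp.toLp 2 (x i)) (WithLp.toLp 2 z) (WithLp.toLp 2 m)

end EuclideanCoordinates

lemma average_evNorm_le_sqrt_spread {M n : ℕ} (hM : 2 ≤ M) (x : Fin M → Fin n → ℝ) :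
    (M : ℝ)⁻¹ * ∑ i, evNorm (x i - empMean M n x) ≤ √(spread M n x) := by
  have hM' : (2 : ℝ) ≤ M := by exact_mod_cast hM
  have : Nonempty (Fin M) := ⟨⟨0, by omega⟩⟩
  have hcs := average_le_sqrt_average_sq fun i : Fin M ↦ evNorm (x i - empMean M n x)
  rw [Fintype.card_fin] at hcs
  refine hcs.trans (Real.sqrt_le_sqrt ?_)
  simp only [evNorm_eq_norm, spread, sqNorm_eq_norm_sq]
  gcongr <;> linarith

/-- Drift estimate for the squared estimation error of the EnKBF:
`⟨f(z) − f̄, z − x̄⟩ ≤ 2 L₊ E + √2 L_f V^{1/2} E^{1/2}`. -/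
theorem drift_error_estimate {n M : ℕ} (hM : 2 ≤ M)
    (f : (Fin n → ℝ) → Fin n → ℝ) (Lf Lp : ℝ) (hLf : 0 ≤ Lf)
    (hf : ∀ x y : Fin n → ℝ, evNorm (f x - f y) ≤ Lf * evNorm (x - y))
    (hLp : ∀ x y : Fin n → ℝ, eip (f x - f y) (x - y) ≤ Lp * sqNorm (x - y))
    (x : Fin M → Fin n → ℝ) (z : Fin n → ℝ) :
    eip (f z - (M : ℝ)⁻¹ • ∑ i, f (x i)) (z - empMean M n x) ≤
      2 * Lp * (sqNorm (z - empMean M n x) / 2) +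
        Real.sqrt 2 * Lf * Real.sqrt (spread M n x) *
          Real.sqrt (sqNorm (z - empMean M n x) / 2) := by
  have : Nonempty (Fin M) := ⟨⟨0, by omega⟩⟩
  set m := empMean M n x
  have hdrift := eip_sub_average_le hf hLp x z m
  rw [Fintype.card_fin] at hdrift
  have hdist : evNorm (z - m) = √2 * √(sqNorm (z - m) / 2) := by
    rw [← Real.sqrt_mul zero_le_two, mul_div_cancel₀ _ two_ne_zero, evNorm]
  rw [hdist] at hdrift
  have hspread := mul_le_mul_of_nonneg_right
    (mul_le_mul_of_nonneg_left (average_evNorm_le_sqrt_spread hM x) hLf)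
    (by positivity : 0 ≤ √2 * √(sqNorm (z - m) / 2))
  linarith

end
end

section
/- (Deterministic core of Proposition 4.1: stability of the Riccati equation) Let A, D, S ∈ ℝ^{n×n} and T > 0. Let P, P̃ : [0, T] → ℝ^{n×n} be differentiable matrix-valued functions both satisfying the Riccati equation P′(t) = A P(t) + P(t) Aᵀ + 2D − P(t) S P(t) on [0, T]. Then for every t ∈ [0, T], ‖P(t) − P̃(t)‖_F² ≤ exp( 4 t ‖A‖_F + 2 ‖S‖_F ∫_0^t ( ‖P(s)‖_F + ‖P̃(s)‖_F ) ds ) · ‖P(0) − P̃(0)‖_F². -/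
open scoped BigOperators
open Matrix MeasureTheory

noncomputable section

/-- Frobenius inner product, auxiliary. -/
def ip {n : ℕ} (X Y : Matrix (Fin n) (Fin n) ℝ) : ℝ := ∑ i, ∑ j, X i j * Y i j

lemma frob_nonneg {m n : ℕ} (X : Matrix (Fin m) (Fin n) ℝ) : 0 ≤ frobNorm X :=
  Real.sqrt_nonneg _

lemma frob_sq {m n : ℕ} (X : Matrix (Fin m) (Fin n) ℝ) :
    frobNorm X ^ 2 = ∑ i, ∑ j, (X i j) ^ 2 := by
  rw [frobNorm, Real.sq_sqrt]; positivity

lemma frob_transpose {n : ℕ} (X : Matrix (Fin n) (Fin n) ℝ) :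
    frobNorm Xᵀ = frobNorm X := by
  rw [frobNorm, frobNorm, Finset.sum_comm]
  simp [Matrix.transpose_apply]

lemma ip_abs_le {n : ℕ} (X Y : Matrix (Fin n) (Fin n) ℝ) :
    |ip X Y| ≤ frobNorm X * frobNorm Y := by
  have h : (ip X Y) ^ 2 ≤ (∑ i, ∑ j, (X i j) ^ 2) * (∑ i, ∑ j, (Y i j) ^ 2) := by
    have := Finset.sum_mul_sq_le_sq_mul_sq Finset.univ
      (fun p : Fin n × Fin n => X p.1 p.2) (fun p : Fin n × Fin n => Y p.1 p.2)
    simpa [ip, Fintype.sum_prod_type] using this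
  calc |ip X Y| = Real.sqrt ((ip X Y) ^ 2) := (Real.sqrt_sq_eq_abs _).symm
    _ ≤ Real.sqrt ((∑ i, ∑ j, (X i j) ^ 2) * (∑ i, ∑ j, (Y i j) ^ 2)) := Real.sqrt_le_sqrt h
    _ = frobNorm X * frobNorm Y := by
        rw [frobNorm, frobNorm, ← Real.sqrt_mul (by positivity)]

lemma frob_mul_le {n : ℕ} (X Y : Matrix (Fin n) (Fin n) ℝ) :
    frobNorm (X * Y) ≤ frobNorm X * frobNorm Y := by
  have key : ∑ i, ∑ j, ((X * Y) i j) ^ 2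
      ≤ (∑ i, ∑ j, (X i j) ^ 2) * (∑ i, ∑ j, (Y i j) ^ 2) := by
    have h1 : ∀ i j : Fin n, ((X * Y) i j) ^ 2 ≤ (∑ k, (X i k) ^ 2) * (∑ k, (Y k j) ^ 2) := by
      intro i j
      have := Finset.sum_mul_sq_le_sq_mul_sq Finset.univ (fun k => X i k) (fun k => Y k j)
      simpa [Matrix.mul_apply] using this
    calc ∑ i, ∑ j, ((X * Y) i j) ^ 2
        ≤ ∑ i, ∑ j, (∑ k, (X i k) ^ 2) * (∑ k, (Y k j) ^ 2) :=
          Finset.sum_le_sum fun i _ => Finset.sum_le_sum fun j _ => h1 i j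
      _ = (∑ i, ∑ k, (X i k) ^ 2) * (∑ j, ∑ k, (Y k j) ^ 2) := by
          rw [Finset.sum_mul_sum]
      _ = (∑ i, ∑ j, (X i j) ^ 2) * (∑ i, ∑ j, (Y i j) ^ 2) := by
          rw [Finset.sum_comm (f := fun j k => (Y k j) ^ 2)]
  calc frobNorm (X * Y) = Real.sqrt (∑ i, ∑ j, ((X * Y) i j) ^ 2) := rfl
    _ ≤ Real.sqrt ((∑ i, ∑ j, (X i j) ^ 2) * (∑ i, ∑ j, (Y i j) ^ 2)) := Real.sqrt_le_sqrt key
    _ = frobNorm X * frobNorm Y := by rw [frobNorm, frobNorm, ← Real.sqrt_mul (by positivity)]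

lemma ip_add {n : ℕ} (X Y Z : Matrix (Fin n) (Fin n) ℝ) :
    ip X (Y + Z) = ip X Y + ip X Z := by
  simp [ip, Matrix.add_apply, mul_add, Finset.sum_add_distrib]

lemma ip_sub {n : ℕ} (X Y Z : Matrix (Fin n) (Fin n) ℝ) :
    ip X (Y - Z) = ip X Y - ip X Z := by
  simp [ip, Matrix.sub_apply, mul_sub, Finset.sum_sub_distrib]

lemma riccati_diff {n : ℕ} (A S C Pm Qm : Matrix (Fin n) (Fin n) ℝ) :
    (A * Pm + Pm * Aᵀ + C - Pm * S * Pm) - (A * Qm + Qm * Aᵀ + C - Qm * S * Qm)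
    = A * (Pm - Qm) + (Pm - Qm) * Aᵀ - ((Pm - Qm) * S * Pm + Qm * S * (Pm - Qm)) := by
  noncomm_ring

/-- Deterministic core of Proposition 4.1: stability of the matrix Riccati equation
in the Frobenius norm. -/
theorem riccati_stability {n : ℕ} (T : ℝ) (hT : 0 < T)
    (A D S : Matrix (Fin n) (Fin n) ℝ)
    (P Ptil : ℝ → Matrix (Fin n) (Fin n) ℝ)
    (hP : ∀ t ∈ Set.Icc (0 : ℝ) T, ∀ k l : Fin n,
      HasDerivAt (fun s => P s k l)
        ((A * P t + P t * Aᵀ + (2 : ℝ) • D - P t * S * P t) k l) t)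
    (hPtil : ∀ t ∈ Set.Icc (0 : ℝ) T, ∀ k l : Fin n,
      HasDerivAt (fun s => Ptil s k l)
        ((A * Ptil t + Ptil t * Aᵀ + (2 : ℝ) • D - Ptil t * S * Ptil t) k l) t) :
    ∀ t ∈ Set.Icc (0 : ℝ) T,
      (frobNorm (P t - Ptil t)) ^ 2 ≤
        Real.exp (4 * t * frobNorm A +
            2 * frobNorm S *
              ∫ s in (0 : ℝ)..t, (frobNorm (P s) + frobNorm (Ptil s))) *
          (frobNorm (P 0 - Ptil 0)) ^ 2 := by
  set nA := frobNorm A with hnA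
  set nS := frobNorm S with hnS
  set c : ℝ → ℝ := fun s => frobNorm (P s) + frobNorm (Ptil s) with hc
  set E : ℝ → ℝ := fun t => ∑ i, ∑ j, (P t i j - Ptil t i j) ^ 2 with hE
  set Δ : ℝ → Matrix (Fin n) (Fin n) ℝ := fun t => P t - Ptil t with hΔ
  set M : ℝ → Matrix (Fin n) (Fin n) ℝ := fun t =>
    A * Δ t + Δ t * Aᵀ - (Δ t * S * P t + Ptil t * S * Δ t) with hM
  -- derivative of E
  have hEderiv : ∀ t ∈ Set.Icc (0 : ℝ) T, HasDerivAt E (2 * ip (Δ t) (M t)) t := by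
    intro t ht
    have key : ∀ i j : Fin n, HasDerivAt (fun s => (P s i j - Ptil s i j) ^ 2)
        (2 * (Δ t i j) * (M t i j)) t := by
      intro i j
      have h := ((hP t ht i j).sub (hPtil t ht i j)).pow 2
      have hm : M t = (A * P t + P t * Aᵀ + (2 : ℝ) • D - P t * S * P t)
          - (A * Ptil t + Ptil t * Aᵀ + (2 : ℝ) • D - Ptil t * S * Ptil t) :=
        (riccati_diff A S ((2:ℝ)•D) (P t) (Ptil t)).symm
      have h2 : HasDerivAt (fun s => (P s i j - Ptil s i j) ^ 2)
          ((2:ℕ) * (P t i j - Ptil t i j) ^ (2 - 1) * ((M t) i j)) t := by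
        rw [hm, Matrix.sub_apply]
        exact h
      have hd : Δ t i j = P t i j - Ptil t i j := rfl
      convert h2 using 1
      rw [hd]
      push_cast
      ring
    have := HasDerivAt.fun_sum (fun i (_ : i ∈ Finset.univ) =>
      HasDerivAt.fun_sum (fun j (_ : j ∈ Finset.univ) => key i j))
    simpa [ip, Finset.mul_sum, mul_assoc] using this
  -- E t = frob Δ ^ 2
  have hEfrob : ∀ t, E t = frobNorm (Δ t) ^ 2 := by
    intro t
    rw [frob_sq]
    simp [hE, hΔ, Matrix.sub_apply]
  have hEnonneg : ∀ t, 0 ≤ E t := by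
    intro t; rw [hEfrob]; positivity
  -- bound on derivative
  have hEb : ∀ t ∈ Set.Icc (0 : ℝ) T,
      2 * ip (Δ t) (M t) ≤ (4 * nA + 2 * nS * c t) * E t := by
    intro t ht
    have hip : ip (Δ t) (M t) = ip (Δ t) (A * Δ t) + ip (Δ t) (Δ t * Aᵀ)
        - (ip (Δ t) (Δ t * S * P t) + ip (Δ t) (Ptil t * S * Δ t)) := by
      rw [hM]
      rw [ip_sub, ip_add, ip_add]
    have fΔ := frob_nonneg (Δ t)
    have fP := frob_nonneg (P t)
    have fQ := frob_nonneg (Ptil t)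
    have t1 : ip (Δ t) (A * Δ t) ≤ nA * frobNorm (Δ t) ^ 2 := by
      calc ip (Δ t) (A * Δ t) ≤ |ip (Δ t) (A * Δ t)| := le_abs_self _
        _ ≤ frobNorm (Δ t) * frobNorm (A * Δ t) := ip_abs_le _ _
        _ ≤ frobNorm (Δ t) * (nA * frobNorm (Δ t)) :=
            mul_le_mul_of_nonneg_left (frob_mul_le A (Δ t)) fΔ
        _ = nA * frobNorm (Δ t) ^ 2 := by ring
    have t2 : ip (Δ t) (Δ t * Aᵀ) ≤ nA * frobNorm (Δ t) ^ 2 := by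
      calc ip (Δ t) (Δ t * Aᵀ) ≤ |ip (Δ t) (Δ t * Aᵀ)| := le_abs_self _
        _ ≤ frobNorm (Δ t) * frobNorm (Δ t * Aᵀ) := ip_abs_le _ _
        _ ≤ frobNorm (Δ t) * (frobNorm (Δ t) * frobNorm Aᵀ) :=
            mul_le_mul_of_nonneg_left (frob_mul_le (Δ t) Aᵀ) fΔ
        _ = nA * frobNorm (Δ t) ^ 2 := by rw [frob_transpose]; ring
    have t3 : -ip (Δ t) (Δ t * S * P t) ≤ nS * frobNorm (P t) * frobNorm (Δ t) ^ 2 := by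
      calc -ip (Δ t) (Δ t * S * P t) ≤ |ip (Δ t) (Δ t * S * P t)| := neg_le_abs _
        _ ≤ frobNorm (Δ t) * frobNorm (Δ t * S * P t) := ip_abs_le _ _
        _ ≤ frobNorm (Δ t) * (frobNorm (Δ t * S) * frobNorm (P t)) :=
            mul_le_mul_of_nonneg_left (frob_mul_le (Δ t * S) (P t)) fΔ
        _ ≤ frobNorm (Δ t) * (frobNorm (Δ t) * nS * frobNorm (P t)) := by
            apply mul_le_mul_of_nonneg_left _ fΔ
            exact mul_le_mul_of_nonneg_right (frob_mul_le (Δ t) S) fP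
        _ = nS * frobNorm (P t) * frobNorm (Δ t) ^ 2 := by ring
    have t4 : -ip (Δ t) (Ptil t * S * Δ t) ≤ nS * frobNorm (Ptil t) * frobNorm (Δ t) ^ 2 := by
      calc -ip (Δ t) (Ptil t * S * Δ t) ≤ |ip (Δ t) (Ptil t * S * Δ t)| := neg_le_abs _
        _ ≤ frobNorm (Δ t) * frobNorm (Ptil t * S * Δ t) := ip_abs_le _ _
        _ ≤ frobNorm (Δ t) * (frobNorm (Ptil t * S) * frobNorm (Δ t)) :=
            mul_le_mul_of_nonneg_left (frob_mul_le (Ptil t * S) (Δ t)) fΔ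
        _ ≤ frobNorm (Δ t) * (frobNorm (Ptil t) * nS * frobNorm (Δ t)) := by
            apply mul_le_mul_of_nonneg_left _ fΔ
            exact mul_le_mul_of_nonneg_right (frob_mul_le (Ptil t) S) fΔ
        _ = nS * frobNorm (Ptil t) * frobNorm (Δ t) ^ 2 := by ring
    have hEt := hEfrob t
    have hct : c t = frobNorm (P t) + frobNorm (Ptil t) := rfl
    rw [hip, hEt, hct]
    nlinarith [t1, t2, t3, t4]
  -- continuity facts
  have hcat : ∀ t ∈ Set.Icc (0 : ℝ) T, ContinuousAt c t := by
    intro t ht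
    have h1 : ContinuousAt (fun s => ∑ i, ∑ j, (P s i j) ^ 2) t :=
      (HasDerivAt.fun_sum (fun i (_ : i ∈ Finset.univ) =>
        HasDerivAt.fun_sum (fun j (_ : j ∈ Finset.univ) => (hP t ht i j).pow 2))).continuousAt
    have h2 : ContinuousAt (fun s => ∑ i, ∑ j, (Ptil s i j) ^ 2) t :=
      (HasDerivAt.fun_sum (fun i (_ : i ∈ Finset.univ) =>
        HasDerivAt.fun_sum (fun j (_ : j ∈ Finset.univ) => (hPtil t ht i j).pow 2))).continuousAt
    have hs1 : ContinuousAt (fun s => frobNorm (P s)) t := by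
      have heq : (fun s => frobNorm (P s))
          = (fun x => Real.sqrt x) ∘ (fun s => ∑ i, ∑ j, (P s i j) ^ 2) := rfl
      rw [heq]
      exact Real.continuous_sqrt.continuousAt.comp h1
    have hs2 : ContinuousAt (fun s => frobNorm (Ptil s)) t := by
      have heq : (fun s => frobNorm (Ptil s))
          = (fun x => Real.sqrt x) ∘ (fun s => ∑ i, ∑ j, (Ptil s i j) ^ 2) := rfl
      rw [heq]
      exact Real.continuous_sqrt.continuousAt.comp h2
    exact hs1.add hs2
  have hconc : ContinuousOn c (Set.Icc 0 T) := fun t ht => (hcat t ht).continuousWithinAt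
  have hint : ∀ t ∈ Set.Icc (0 : ℝ) T, IntervalIntegrable c volume 0 t := by
    intro t ht
    apply ContinuousOn.intervalIntegrable
    apply hconc.mono
    rw [Set.uIcc_of_le ht.1]
    exact Set.Icc_subset_Icc le_rfl ht.2
  set I : ℝ → ℝ := fun t => ∫ s in (0:ℝ)..t, c s with hI
  set φ : ℝ → ℝ := fun t => 4 * t * nA + 2 * nS * I t with hφ
  set g : ℝ → ℝ := fun t => E t * Real.exp (-(φ t)) with hg
  -- continuity of g on Icc
  have hEcont : ContinuousOn E (Set.Icc 0 T) := fun t ht =>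
    (hEderiv t ht).continuousAt.continuousWithinAt
  have hIcont : ContinuousOn I (Set.Icc 0 T) := by
    have hio : IntegrableOn c (Set.uIcc (0:ℝ) T) volume := by
      rw [Set.uIcc_of_le hT.le]
      exact hconc.integrableOn_Icc
    have := intervalIntegral.continuousOn_primitive_interval
      (a := (0:ℝ)) (b := T) (f := c) (μ := volume) hio
    rwa [Set.uIcc_of_le hT.le] at this
  have hφcont : ContinuousOn φ (Set.Icc 0 T) := by
    apply ContinuousOn.add
    · exact Continuous.continuousOn (by fun_prop)
    · exact continuousOn_const.mul hIcont
  have hgcont : ContinuousOn g (Set.Icc 0 T) :=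
    hEcont.mul (Real.continuous_exp.comp_continuousOn hφcont.neg)
  -- derivative of g at interior points
  have hgderiv : ∀ x ∈ Set.Ioo (0:ℝ) T,
      HasDerivAt g (2 * ip (Δ x) (M x) * Real.exp (-(φ x))
        + E x * (-(4 * nA + 2 * nS * c x) * Real.exp (-(φ x)))) x := by
    intro x hx
    have hxIcc : x ∈ Set.Icc (0:ℝ) T := Set.Ioo_subset_Icc_self hx
    have hmeas : StronglyMeasurableAtFilter c (nhds x) volume :=
      ContinuousAt.stronglyMeasurableAtFilter isOpen_Ioo
        (fun y hy => hcat y (Set.Ioo_subset_Icc_self hy)) x hx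
    have hI' : HasDerivAt I (c x) x :=
      intervalIntegral.integral_hasDerivAt_right (hint x hxIcc) hmeas (hcat x hxIcc)
    have hφ' : HasDerivAt φ (4 * nA + 2 * nS * c x) x := by
      have h1 : HasDerivAt (fun t => 4 * t * nA) (4 * nA) x := by
        simpa using ((hasDerivAt_id x).const_mul (4:ℝ)).mul_const nA
      have h2 : HasDerivAt (fun t => 2 * nS * I t) (2 * nS * c x) x :=
        hI'.const_mul (2 * nS)
      exact h1.add h2
    have hexp : HasDerivAt (fun t => Real.exp (-(φ t)))
        (-(4 * nA + 2 * nS * c x) * Real.exp (-(φ x))) x := by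
      have := hφ'.neg.exp
      simpa [mul_comm] using this
    exact (hEderiv x hxIcc).mul hexp
  -- g is antitone
  have hant : AntitoneOn g (Set.Icc 0 T) := by
    apply antitoneOn_of_deriv_nonpos (convex_Icc 0 T) hgcont
    · rw [interior_Icc]
      intro x hx
      exact (hgderiv x hx).differentiableAt.differentiableWithinAt
    · rw [interior_Icc]
      intro x hx
      rw [(hgderiv x hx).deriv]
      have hb := hEb x (Set.Ioo_subset_Icc_self hx)
      have hexp := Real.exp_pos (-(φ x))
      have hE0 := hEnonneg x
      nlinarith [hexp, hb, hE0]
  -- conclude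
  intro t ht
  have h0 : (0:ℝ) ∈ Set.Icc (0:ℝ) T := ⟨le_rfl, hT.le⟩
  have hg0 : g t ≤ g 0 := hant h0 ht ht.1
  have hφ0 : φ 0 = 0 := by
    simp [hφ, hI, intervalIntegral.integral_same]
  have h00 : g 0 = E 0 := by
    rw [hg]
    simp [hφ0]
  have hgt : E t * Real.exp (-(φ t)) ≤ E 0 := by
    calc E t * Real.exp (-(φ t)) = g t := rfl
      _ ≤ g 0 := hg0
      _ = E 0 := h00
  have hfinal : E t ≤ Real.exp (φ t) * E 0 := by
    have hp := Real.exp_pos (φ t)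
    have h1 : E t * Real.exp (-(φ t)) * Real.exp (φ t) ≤ E 0 * Real.exp (φ t) :=
      mul_le_mul_of_nonneg_right hgt hp.le
    have h2 : E t * Real.exp (-(φ t)) * Real.exp (φ t) = E t := by
      rw [mul_assoc, ← Real.exp_add]
      simp
    rw [h2] at h1
    linarith [h1]
  have hgoal1 : frobNorm (P t - Ptil t) ^ 2 = E t := by
    rw [frob_sq]; simp [hE, Matrix.sub_apply]
  have hgoal2 : frobNorm (P 0 - Ptil 0) ^ 2 = E 0 := by
    rw [frob_sq]; simp [hE, Matrix.sub_apply]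
  rw [hgoal1, hgoal2]
  exact hfinal

end
end

section
/- (Quadratic-form estimate from the proof of Lemma 5.3) Let X be a random vector in ℝ^n with E‖X‖² < ∞ and mean μ = E[X], let h : ℝ^n → ℝ^m be globally Lipschitz continuous with Lipschitz constant L_h and h̄ = E[h(X)], let 𝒫 ∈ ℝ^{n×n} be the covariance matrix of X, let 𝒬 ∈ ℝ^{n×m} be the cross-covariance 𝒬_{kl} = E[(X_k − μ_k)(h(X)_l − h̄_l)], and let R ∈ ℝ^{m×m} be symmetric positive definite. Then for every v ∈ ℝ^n, ⟨ R^{−1} 𝒬ᵀ v, 𝒬ᵀ v ⟩ ≤ ‖R^{−1}‖_F · L_h² · E[‖X − μ‖²] · ⟨ 𝒫 v, v ⟩. -/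
open scoped BigOperators
open Matrix MeasureTheory

noncomputable section

lemma sqNorm_nonneg' {n : ℕ} (v : Fin n → ℝ) : 0 ≤ sqNorm v :=
  Finset.sum_nonneg fun _ _ => sq_nonneg _

lemma evNorm_sq' {n : ℕ} (v : Fin n → ℝ) : evNorm v ^ 2 = sqNorm v :=
  Real.sq_sqrt (sqNorm_nonneg' v)

section Aux

variable {Ω : Type*} [MeasurableSpace Ω] {μ : Measure Ω}

lemma integrable_of_sq' {f : Ω → ℝ} (hm : AEStronglyMeasurable f μ)
    (h1 : Integrable (fun _ : Ω => (1:ℝ)) μ)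
    (h2 : Integrable (fun ω => f ω ^ 2) μ) : Integrable f μ := by
  refine (h1.add h2).mono' hm (ae_of_all _ fun ω => ?_)
  simp only [Real.norm_eq_abs, Pi.add_apply]
  nlinarith [sq_nonneg (|f ω| - 1), sq_abs (f ω), abs_nonneg (f ω)]

lemma integrable_mul_of_sq' {f g : Ω → ℝ} (hf : AEStronglyMeasurable f μ)
    (hg : AEStronglyMeasurable g μ)
    (hf2 : Integrable (fun ω => f ω ^ 2) μ) (hg2 : Integrable (fun ω => g ω ^ 2) μ) :
    Integrable (fun ω => f ω * g ω) μ := by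
  refine (hf2.add hg2).mono' (hf.mul hg) (ae_of_all _ fun ω => ?_)
  simp only [Real.norm_eq_abs, Pi.add_apply, abs_mul]
  nlinarith [sq_nonneg (|f ω| - |g ω|), sq_abs (f ω), sq_abs (g ω),
    abs_nonneg (f ω), abs_nonneg (g ω)]

lemma integral_cs' {f g : Ω → ℝ}
    (hf2 : Integrable (fun ω => f ω ^ 2) μ) (hg2 : Integrable (fun ω => g ω ^ 2) μ)
    (hfg : Integrable (fun ω => f ω * g ω) μ) :
    (∫ ω, f ω * g ω ∂μ) ^ 2 ≤ (∫ ω, f ω ^ 2 ∂μ) * (∫ ω, g ω ^ 2 ∂μ) := by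
  set A := ∫ ω, f ω ^ 2 ∂μ with hAdef
  set B := ∫ ω, g ω ^ 2 ∂μ
  set C := ∫ ω, f ω * g ω ∂μ
  have hA : 0 ≤ A := integral_nonneg fun ω => sq_nonneg _
  have hB : 0 ≤ B := integral_nonneg fun ω => sq_nonneg _
  have key : ∀ t : ℝ, 0 ≤ t ^ 2 * A + 2 * t * C + B := by
    intro t
    have h0 : 0 ≤ ∫ ω, (t * f ω + g ω) ^ 2 ∂μ := integral_nonneg fun ω => sq_nonneg _
    have expand : ∫ ω, (t * f ω + g ω) ^ 2 ∂μ = t ^ 2 * A + 2 * t * C + B := by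
      have e : ∀ ω, (t * f ω + g ω) ^ 2
          = t ^ 2 * f ω ^ 2 + 2 * t * (f ω * g ω) + g ω ^ 2 := fun ω => by ring
      simp_rw [e]
      have i1 : Integrable (fun ω => t ^ 2 * f ω ^ 2) μ := hf2.const_mul _
      have i2 : Integrable (fun ω => 2 * t * (f ω * g ω)) μ := hfg.const_mul _
      have i12 : Integrable (fun ω => t ^ 2 * f ω ^ 2 + 2 * t * (f ω * g ω)) μ := i1.add i2
      rw [integral_add i12 hg2, integral_add i1 i2, integral_const_mul, integral_const_mul]
    linarith [expand ▸ h0]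
  rcases hA.eq_or_lt with hA0 | hA0
  · have hC : C = 0 := by
      by_contra hC
      have h1 := key (-(B + 1) / (2 * C))
      rw [← hA0] at h1
      have h2 : (2:ℝ) * (-(B + 1) / (2 * C)) * C = -(B + 1) := by
        field_simp
      rw [h2] at h1
      linarith
    rw [hC, ← hA0]; simp
  · have h1 := key (-C / A)
    have h2 : (-C / A) ^ 2 * A = C ^ 2 / A := by
      field_simp
    have h3 : 2 * (-C / A) * C = -(2 * (C ^ 2 / A)) := by
      field_simp
    rw [h2, h3] at h1
    have h4 : C ^ 2 / A ≤ B := by linarith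
    calc C ^ 2 = (C ^ 2 / A) * A := by field_simp
      _ ≤ B * A := mul_le_mul_of_nonneg_right h4 hA
      _ = A * B := mul_comm _ _

end Aux

/-- Quadratic-form estimate from the proof of Lemma 5.3:
`⟨R⁻¹ 𝒬ᵀ v, 𝒬ᵀ v⟩ ≤ ‖R⁻¹‖_F L_h² E‖X − μ‖² ⟨𝒫 v, v⟩` for every `v`. -/
theorem cross_covariance_quadratic_estimate {n m : ℕ} {Ω : Type*} [MeasurableSpace Ω]
    (μ : Measure Ω) [IsProbabilityMeasure μ]
    (X : Ω → Fin n → ℝ) (hXm : Measurable X)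
    (hX2 : Integrable (fun ω => sqNorm (X ω)) μ)
    (h : (Fin n → ℝ) → Fin m → ℝ) (Lh : ℝ) (hLh : 0 ≤ Lh)
    (hh : ∀ x y : Fin n → ℝ, evNorm (h x - h y) ≤ Lh * evNorm (x - y))
    (mu : Fin n → ℝ) (hmu : ∀ k, mu k = ∫ ω, X ω k ∂μ)
    (hbar : Fin m → ℝ) (hhbar : ∀ l, hbar l = ∫ ω, h (X ω) l ∂μ)
    (P : Matrix (Fin n) (Fin n) ℝ)
    (hP : ∀ k l, P k l = ∫ ω, (X ω k - mu k) * (X ω l - mu l) ∂μ)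
    (Q : Matrix (Fin n) (Fin m) ℝ)
    (hQ : ∀ k l, Q k l = ∫ ω, (X ω k - mu k) * (h (X ω) l - hbar l) ∂μ)
    (R : Matrix (Fin m) (Fin m) ℝ) (hR : R.PosDef) :
    ∀ v : Fin n → ℝ,
      eip (R⁻¹.mulVec (Qᵀ.mulVec v)) (Qᵀ.mulVec v) ≤
        frobNorm R⁻¹ * Lh ^ 2 * (∫ ω, sqNorm (X ω - mu) ∂μ) *
          eip (P.mulVec v) v := by
  -- Lipschitz bound for squared norms
  have key2 : ∀ x y : Fin n → ℝ, sqNorm (h x - h y) ≤ Lh ^ 2 * sqNorm (x - y) := by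
    intro x y
    have e2 := evNorm_sq' (x - y)
    have h1 := hh x y
    have hn : 0 ≤ evNorm (h x - h y) := Real.sqrt_nonneg _
    calc sqNorm (h x - h y) = evNorm (h x - h y) ^ 2 := (evNorm_sq' _).symm
      _ ≤ (Lh * evNorm (x - y)) ^ 2 := pow_le_pow_left₀ hn h1 2
      _ = Lh ^ 2 * sqNorm (x - y) := by rw [mul_pow, e2]
  have key : ∀ (x y : Fin n → ℝ) (l : Fin m),
      (h x l - h y l) ^ 2 ≤ Lh ^ 2 * sqNorm (x - y) := by
    intro x y l
    refine le_trans ?_ (key2 x y)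
    have := Finset.single_le_sum (f := fun j => ((h x - h y) j) ^ 2)
      (fun i _ => sq_nonneg _) (Finset.mem_univ l)
    simpa [sqNorm] using this
  -- measurability of the coordinates of h
  have hmeas : ∀ l, Measurable fun x : Fin n → ℝ => h x l := by
    intro l
    have hlip : LipschitzWith (Real.toNNReal (Lh * Real.sqrt n))
        (fun x : Fin n → ℝ => h x l) := by
      apply LipschitzWith.of_dist_le_mul
      intro x y
      have hb : (0:ℝ) ≤ Lh * Real.sqrt n * dist x y :=
        mul_nonneg (mul_nonneg hLh (Real.sqrt_nonneg _)) dist_nonneg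
      have h2 : sqNorm (x - y) ≤ (n : ℝ) * dist x y ^ 2 := by
        have hc : ∀ k, ((x - y) k) ^ 2 ≤ dist x y ^ 2 := by
          intro k
          have hd := dist_le_pi_dist x y k
          have habs : |x k - y k| ≤ dist x y := by rwa [Real.dist_eq] at hd
          calc ((x - y) k) ^ 2 = |x k - y k| ^ 2 := by rw [sq_abs]; rfl
            _ ≤ dist x y ^ 2 := pow_le_pow_left₀ (abs_nonneg _) habs 2
        calc sqNorm (x - y) ≤ ∑ _k : Fin n, dist x y ^ 2 :=
              Finset.sum_le_sum fun k _ => hc k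
          _ = (n : ℝ) * dist x y ^ 2 := by
              rw [Finset.sum_const, Finset.card_univ, Fintype.card_fin, nsmul_eq_mul]
      have h3 : (h x l - h y l) ^ 2 ≤ (Lh * Real.sqrt n * dist x y) ^ 2 := by
        calc (h x l - h y l) ^ 2 ≤ Lh ^ 2 * sqNorm (x - y) := key x y l
          _ ≤ Lh ^ 2 * ((n:ℝ) * dist x y ^ 2) :=
              mul_le_mul_of_nonneg_left h2 (sq_nonneg _)
          _ = (Lh * Real.sqrt n * dist x y) ^ 2 := by
              rw [mul_pow, mul_pow, Real.sq_sqrt (Nat.cast_nonneg n)]; ring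
      have h4 : |h x l - h y l| ≤ Lh * Real.sqrt n * dist x y := by
        have h5 := Real.sqrt_le_sqrt h3
        rwa [Real.sqrt_sq_eq_abs, Real.sqrt_sq hb] at h5
      calc dist (h x l) (h y l) = |h x l - h y l| := Real.dist_eq _ _
        _ ≤ Lh * Real.sqrt n * dist x y := h4
        _ = (Real.toNNReal (Lh * Real.sqrt n) : ℝ) * dist x y := by
            rw [Real.coe_toNNReal _ (mul_nonneg hLh (Real.sqrt_nonneg _))]
    exact hlip.continuous.measurable
  intro v
  -- measurability facts
  have mX : ∀ k, Measurable fun ω => X ω k := fun k => (measurable_pi_apply k).comp hXm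
  have ma : ∀ k, Measurable fun ω => X ω k - mu k := fun k => (mX k).sub measurable_const
  have mh : ∀ l, Measurable fun ω => h (X ω) l := fun l => (hmeas l).comp hXm
  have mg : ∀ l, Measurable fun ω => h (X ω) l - hbar l := fun l => (mh l).sub measurable_const
  -- integrability facts
  have iX2 : ∀ k, Integrable (fun ω => (X ω k) ^ 2) μ := by
    intro k
    refine hX2.mono' ((mX k).pow_const 2).aestronglyMeasurable (ae_of_all _ fun ω => ?_)
    rw [Real.norm_eq_abs, abs_of_nonneg (sq_nonneg _)]
    have := Finset.single_le_sum (f := fun j => (X ω j) ^ 2)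
      (fun i _ => sq_nonneg _) (Finset.mem_univ k)
    simpa [sqNorm] using this
  have ia2 : ∀ k, Integrable (fun ω => (X ω k - mu k) ^ 2) μ := by
    intro k
    refine (((iX2 k).const_mul 2).add (integrable_const (2 * mu k ^ 2))).mono'
      ((ma k).pow_const 2).aestronglyMeasurable (ae_of_all _ fun ω => ?_)
    simp only [Pi.add_apply]
    rw [Real.norm_eq_abs, abs_of_nonneg (sq_nonneg _)]
    nlinarith [sq_nonneg (X ω k + mu k)]
  have ih2 : ∀ l, Integrable (fun ω => (h (X ω) l) ^ 2) μ := by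
    intro l
    refine ((hX2.const_mul (2 * Lh ^ 2)).add (integrable_const (2 * (h 0 l) ^ 2))).mono'
      ((mh l).pow_const 2).aestronglyMeasurable (ae_of_all _ fun ω => ?_)
    simp only [Pi.add_apply]
    rw [Real.norm_eq_abs, abs_of_nonneg (sq_nonneg _)]
    have hk := key (X ω) 0 l
    rw [sub_zero] at hk
    nlinarith [sq_nonneg (h (X ω) l - 2 * h 0 l)]
  have ig2 : ∀ l, Integrable (fun ω => (h (X ω) l - hbar l) ^ 2) μ := by
    intro l
    refine (((ih2 l).const_mul 2).add (integrable_const (2 * hbar l ^ 2))).mono'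
      ((mg l).pow_const 2).aestronglyMeasurable (ae_of_all _ fun ω => ?_)
    simp only [Pi.add_apply]
    rw [Real.norm_eq_abs, abs_of_nonneg (sq_nonneg _)]
    nlinarith [sq_nonneg (h (X ω) l + hbar l)]
  have ihc2 : ∀ l, Integrable (fun ω => (h (X ω) l - h mu l) ^ 2) μ := by
    intro l
    refine (((ih2 l).const_mul 2).add (integrable_const (2 * (h mu l) ^ 2))).mono'
      (((mh l).sub measurable_const).pow_const 2).aestronglyMeasurable
      (ae_of_all _ fun ω => ?_)
    simp only [Pi.add_apply]
    rw [Real.norm_eq_abs, abs_of_nonneg (sq_nonneg _)]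
    nlinarith [sq_nonneg (h (X ω) l + h mu l)]
  have ih1 : ∀ l, Integrable (fun ω => h (X ω) l) μ :=
    fun l => integrable_of_sq' (mh l).aestronglyMeasurable (integrable_const 1) (ih2 l)
  have ig0 : ∀ l, ∫ ω, (h (X ω) l - hbar l) ∂μ = 0 := by
    intro l
    rw [integral_sub (ih1 l) (integrable_const _), integral_const, probReal_univ,
      one_smul, hhbar l, sub_self]
  have iag : ∀ k l, Integrable (fun ω => (X ω k - mu k) * (h (X ω) l - hbar l)) μ :=
    fun k l => integrable_mul_of_sq' (ma k).aestronglyMeasurable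
      (mg l).aestronglyMeasurable (ia2 k) (ig2 l)
  have iaa : ∀ k j, Integrable (fun ω => (X ω k - mu k) * (X ω j - mu j)) μ :=
    fun k j => integrable_mul_of_sq' (ma k).aestronglyMeasurable
      (ma j).aestronglyMeasurable (ia2 k) (ia2 j)
  have isq : Integrable (fun ω => sqNorm (X ω - mu)) μ := by
    have e : (fun ω => sqNorm (X ω - mu)) = fun ω => ∑ k, (X ω k - mu k) ^ 2 := by
      funext ω; simp [sqNorm]
    rw [e]
    exact integrable_finset_sum _ fun k _ => ia2 k
  -- expansion of the square of d
  have ed2 : ∀ ω : Ω, (∑ k, (X ω k - mu k) * v k) ^ 2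
      = ∑ k, ∑ j, v k * v j * ((X ω k - mu k) * (X ω j - mu j)) := by
    intro ω
    rw [sq, Finset.sum_mul_sum]
    exact Finset.sum_congr rfl fun k _ => Finset.sum_congr rfl fun j _ => by ring
  have id2 : Integrable (fun ω => (∑ k, (X ω k - mu k) * v k) ^ 2) μ := by
    simp_rw [ed2]
    exact integrable_finset_sum _ fun k _ =>
      integrable_finset_sum _ fun j _ => (iaa k j).const_mul _
  have idg : ∀ l, Integrable
      (fun ω => (∑ k, (X ω k - mu k) * v k) * (h (X ω) l - hbar l)) μ := by
    intro l
    have e : ∀ ω : Ω, (∑ k, (X ω k - mu k) * v k) * (h (X ω) l - hbar l)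
        = ∑ k, v k * ((X ω k - mu k) * (h (X ω) l - hbar l)) := by
      intro ω; rw [Finset.sum_mul]; exact Finset.sum_congr rfl fun k _ => by ring
    simp_rw [e]
    exact integrable_finset_sum _ fun k _ => (iag k l).const_mul _
  -- ⟨P v, v⟩ = ∫ d²
  have hPvv : eip (P.mulVec v) v = ∫ ω, (∑ k, (X ω k - mu k) * v k) ^ 2 ∂μ := by
    have e1 : ∫ ω, (∑ k, (X ω k - mu k) * v k) ^ 2 ∂μ
        = ∑ k, ∑ j, v k * v j * P k j := by
      simp_rw [ed2]
      rw [integral_finset_sum _ (fun k _ =>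
        integrable_finset_sum _ fun j _ => (iaa k j).const_mul _)]
      refine Finset.sum_congr rfl fun k _ => ?_
      rw [integral_finset_sum _ (fun j _ => (iaa k j).const_mul _)]
      refine Finset.sum_congr rfl fun j _ => ?_
      rw [integral_const_mul, hP k j]
    rw [e1]
    simp only [eip, Matrix.mulVec, dotProduct]
    refine Finset.sum_congr rfl fun k _ => ?_
    rw [Finset.sum_mul]
    refine Finset.sum_congr rfl fun j _ => by ring
  -- the entries of w = Qᵀ v
  have hwl : ∀ l, (Qᵀ.mulVec v) l
      = ∫ ω, (∑ k, (X ω k - mu k) * v k) * (h (X ω) l - hbar l) ∂μ := by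
    intro l
    have e : ∀ ω : Ω, (∑ k, (X ω k - mu k) * v k) * (h (X ω) l - hbar l)
        = ∑ k, ((X ω k - mu k) * (h (X ω) l - hbar l)) * v k := by
      intro ω; rw [Finset.sum_mul]; exact Finset.sum_congr rfl fun k _ => by ring
    simp_rw [e]
    rw [integral_finset_sum _ (fun k _ => (iag k l).mul_const _)]
    simp only [Matrix.mulVec, dotProduct, Matrix.transpose_apply]
    refine Finset.sum_congr rfl fun k _ => ?_
    rw [hQ k l, integral_mul_const]
  -- abbreviations
  have hI0 : 0 ≤ ∫ ω, sqNorm (X ω - mu) ∂μ := integral_nonneg fun ω => sqNorm_nonneg' _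
  have hF0 : (0:ℝ) ≤ frobNorm R⁻¹ := Real.sqrt_nonneg _
  have hS0 : (0:ℝ) ≤ ∑ l, ((Qᵀ.mulVec v) l) ^ 2 := Finset.sum_nonneg fun _ _ => sq_nonneg _
  -- Step A : quadratic form bounded by Frobenius norm times ∑ w²
  have stepA : eip (R⁻¹.mulVec (Qᵀ.mulVec v)) (Qᵀ.mulVec v)
      ≤ frobNorm R⁻¹ * ∑ l, ((Qᵀ.mulVec v) l) ^ 2 := by
    set w := Qᵀ.mulVec v with hw
    have e1 : eip (R⁻¹.mulVec w) w
        = ∑ p : Fin m × Fin m, (R⁻¹ p.1 p.2) * (w p.2 * w p.1) := by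
      rw [Fintype.sum_prod_type]
      simp only [eip, Matrix.mulVec, dotProduct]
      refine Finset.sum_congr rfl fun l _ => ?_
      rw [Finset.sum_mul]
      exact Finset.sum_congr rfl fun l' _ => by ring
    have cs := Finset.sum_mul_sq_le_sq_mul_sq Finset.univ
      (fun p : Fin m × Fin m => R⁻¹ p.1 p.2) (fun p => w p.2 * w p.1)
    have e2 : ∑ p : Fin m × Fin m, (R⁻¹ p.1 p.2) ^ 2 = frobNorm R⁻¹ ^ 2 := by
      rw [Fintype.sum_prod_type, frobNorm]
      exact (Real.sq_sqrt (Finset.sum_nonneg fun _ _ => Finset.sum_nonneg fun _ _ => sq_nonneg _)).symm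
    have e3 : ∑ p : Fin m × Fin m, (w p.2 * w p.1) ^ 2 = (∑ l, (w l) ^ 2) ^ 2 := by
      rw [Fintype.sum_prod_type, sq, Finset.sum_mul_sum]
      refine Finset.sum_congr rfl fun l _ => Finset.sum_congr rfl fun l' _ => by
        rw [mul_pow]; ring
    rw [e1]
    have h4 : (∑ p : Fin m × Fin m, (R⁻¹ p.1 p.2) * (w p.2 * w p.1)) ^ 2
        ≤ (frobNorm R⁻¹ * ∑ l, (w l) ^ 2) ^ 2 := by
      rw [mul_pow]
      calc (∑ p : Fin m × Fin m, (R⁻¹ p.1 p.2) * (w p.2 * w p.1)) ^ 2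
          ≤ (∑ p : Fin m × Fin m, (R⁻¹ p.1 p.2) ^ 2)
            * ∑ p : Fin m × Fin m, (w p.2 * w p.1) ^ 2 := cs
        _ = frobNorm R⁻¹ ^ 2 * (∑ l, (w l) ^ 2) ^ 2 := by rw [e2, e3]
    have h5 := Real.sqrt_le_sqrt h4
    rw [Real.sqrt_sq_eq_abs, Real.sqrt_sq (mul_nonneg hF0 hS0)] at h5
    exact le_trans (le_abs_self _) h5
  -- Step B : variance bound for h
  have gvar : ∀ l, ∫ ω, (h (X ω) l - hbar l) ^ 2 ∂μ
      ≤ ∫ ω, (h (X ω) l - h mu l) ^ 2 ∂μ := by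
    intro l
    have e : ∀ ω : Ω, (h (X ω) l - h mu l) ^ 2
        = (h (X ω) l - hbar l) ^ 2
          + (2 * (hbar l - h mu l)) * (h (X ω) l - hbar l) + (hbar l - h mu l) ^ 2 := by
      intro ω; ring
    have i1 := ig2 l
    have i2 : Integrable (fun ω => (2 * (hbar l - h mu l)) * (h (X ω) l - hbar l)) μ :=
      ((ih1 l).sub (integrable_const _)).const_mul _
    have i12 : Integrable (fun ω => (h (X ω) l - hbar l) ^ 2
        + (2 * (hbar l - h mu l)) * (h (X ω) l - hbar l)) μ := i1.add i2
    have e4 : ∫ ω, (h (X ω) l - h mu l) ^ 2 ∂μ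
        = (∫ ω, (h (X ω) l - hbar l) ^ 2 ∂μ) + (hbar l - h mu l) ^ 2 := by
      simp_rw [e]
      rw [integral_add i12 (integrable_const _), integral_add i1 i2, integral_const_mul]
      have e5 : ∫ ω, (h (X ω) l - hbar l) ∂μ = 0 := ig0 l
      rw [e5, integral_const, probReal_univ, one_smul]
      ring
    rw [e4]
    exact le_add_of_nonneg_right (sq_nonneg _)
  have sumvar : ∑ l, ∫ ω, (h (X ω) l - hbar l) ^ 2 ∂μ
      ≤ Lh ^ 2 * ∫ ω, sqNorm (X ω - mu) ∂μ := by
    calc ∑ l, ∫ ω, (h (X ω) l - hbar l) ^ 2 ∂μ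
        ≤ ∑ l, ∫ ω, (h (X ω) l - h mu l) ^ 2 ∂μ :=
          Finset.sum_le_sum fun l _ => gvar l
      _ = ∫ ω, ∑ l, (h (X ω) l - h mu l) ^ 2 ∂μ :=
          (integral_finset_sum _ fun l _ => ihc2 l).symm
      _ ≤ ∫ ω, Lh ^ 2 * sqNorm (X ω - mu) ∂μ := by
          refine integral_mono (integrable_finset_sum _ fun l _ => ihc2 l)
            (isq.const_mul _) fun ω => ?_
          have hk := key2 (X ω) mu
          have e : ∑ l, (h (X ω) l - h mu l) ^ 2 = sqNorm (h (X ω) - h mu) := by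
            simp [sqNorm]
          rw [e]; exact hk
      _ = Lh ^ 2 * ∫ ω, sqNorm (X ω - mu) ∂μ := integral_const_mul _ _
  have stepB : ∑ l, ((Qᵀ.mulVec v) l) ^ 2
      ≤ (∫ ω, (∑ k, (X ω k - mu k) * v k) ^ 2 ∂μ)
        * (Lh ^ 2 * ∫ ω, sqNorm (X ω - mu) ∂μ) := by
    have hd2nonneg : 0 ≤ ∫ ω, (∑ k, (X ω k - mu k) * v k) ^ 2 ∂μ :=
      integral_nonneg fun ω => sq_nonneg _
    calc ∑ l, ((Qᵀ.mulVec v) l) ^ 2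
        = ∑ l, (∫ ω, (∑ k, (X ω k - mu k) * v k) * (h (X ω) l - hbar l) ∂μ) ^ 2 := by
          refine Finset.sum_congr rfl fun l _ => ?_
          rw [hwl l]
      _ ≤ ∑ l, (∫ ω, (∑ k, (X ω k - mu k) * v k) ^ 2 ∂μ)
            * ∫ ω, (h (X ω) l - hbar l) ^ 2 ∂μ :=
          Finset.sum_le_sum fun l _ => integral_cs' id2 (ig2 l) (idg l)
      _ = (∫ ω, (∑ k, (X ω k - mu k) * v k) ^ 2 ∂μ)
            * ∑ l, ∫ ω, (h (X ω) l - hbar l) ^ 2 ∂μ := by rw [Finset.mul_sum]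
      _ ≤ (∫ ω, (∑ k, (X ω k - mu k) * v k) ^ 2 ∂μ)
            * (Lh ^ 2 * ∫ ω, sqNorm (X ω - mu) ∂μ) :=
          mul_le_mul_of_nonneg_left sumvar hd2nonneg
  -- combine
  calc eip (R⁻¹.mulVec (Qᵀ.mulVec v)) (Qᵀ.mulVec v)
      ≤ frobNorm R⁻¹ * ∑ l, ((Qᵀ.mulVec v) l) ^ 2 := stepA
    _ ≤ frobNorm R⁻¹ * ((∫ ω, (∑ k, (X ω k - mu k) * v k) ^ 2 ∂μ)
          * (Lh ^ 2 * ∫ ω, sqNorm (X ω - mu) ∂μ)) :=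
        mul_le_mul_of_nonneg_left stepB hF0
    _ = frobNorm R⁻¹ * Lh ^ 2 * (∫ ω, sqNorm (X ω - mu) ∂μ)
          * ∫ ω, (∑ k, (X ω k - mu k) * v k) ^ 2 ∂μ := by ring
    _ = frobNorm R⁻¹ * Lh ^ 2 * (∫ ω, sqNorm (X ω - mu) ∂μ) * eip (P.mulVec v) v := by
        rw [hPvv]

end
end

section
/- (Energy identity (12)–(14) for the fully observed ensemble Kalman–Bucy filter) Let f : ℝ^n → ℝ^n, let D ∈ ℝ^{n×n}, let R ∈ ℝ^{n×n} be symmetric positive definite, M ≥ 2, and let y : [0, T] → ℝ^n be differentiable. Suppose X^1, …, X^M : [0, T] → ℝ^n are differentiable, the empirical covariance matrix P(t) of the ensemble is invertible for all t ∈ [0, T], and each particle satisfies (d/dt) X^i(t) = f(X^i(t)) + D P(t)^{−1} (X^i(t) − x̄(t)) − (1/2) P(t) R^{−1} ( X^i(t) + x̄(t) − 2 y′(t) ). Then the ensemble spread V(t) satisfies, for all t ∈ [0, T], (1/2) V′(t) = (1/(M−1)) Σ_{i=1}^M ⟨ X^i(t) − x̄(t), f(X^i(t)) − f(x̄(t))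 ⟩ + tr(D) − (1/2) ‖R^{−1/2} P(t)‖_F², where R^{−1/2} is the inverse of the positive definite square root of R. -/
open scoped BigOperators
open Matrix MeasureTheory

noncomputable section

/-- Square root of a positive semidefinite matrix (as `Matrix.PosSemidef.sqrt` in older Mathlib). -/
def Matrix.PosSemidef.sqrt {m : Type*} [Fintype m] [DecidableEq m] {A : Matrix m m ℝ}
    (hA : A.PosSemidef) : Matrix m m ℝ :=
  (hA.isHermitian.eigenvectorUnitary : Matrix m m ℝ) *
    diagonal ((↑) ∘ (Real.sqrt ·) ∘ hA.isHermitian.eigenvalues) *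
    (star hA.isHermitian.eigenvectorUnitary : Matrix m m ℝ)

lemma Matrix.PosSemidef.sqrt_conjTranspose' {m : Type*} [Fintype m] [DecidableEq m]
    {A : Matrix m m ℝ} (hA : A.PosSemidef) : (hA.sqrt)ᴴ = hA.sqrt := by
  simp only [Matrix.PosSemidef.sqrt, Matrix.conjTranspose_mul, Matrix.diagonal_conjTranspose,
    Matrix.star_eq_conjTranspose, Matrix.conjTranspose_conjTranspose, Matrix.mul_assoc]
  congr 2

lemma Matrix.PosSemidef.sqrt_mul_self' {m : Type*} [Fintype m] [DecidableEq m]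
    {A : Matrix m m ℝ} (hA : A.PosSemidef) : hA.sqrt * hA.sqrt = A := by
  conv_rhs => rw [hA.isHermitian.spectral_theorem, Unitary.conjStarAlgAut_apply]
  simp only [Matrix.PosSemidef.sqrt, Matrix.mul_assoc]
  congr 1
  rw [← Matrix.mul_assoc (star _ : Matrix m m ℝ) _ _, Unitary.coe_star_mul_self, Matrix.one_mul,
    ← Matrix.mul_assoc, Matrix.diagonal_mul_diagonal]
  congr 2
  ext i
  simp [Real.mul_self_sqrt (hA.eigenvalues_nonneg i)]

section Aux

variable {M n : ℕ}

lemma empMean_apply' (x : Fin M → Fin n → ℝ) (k : Fin n) :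
    empMean M n x k = (M : ℝ)⁻¹ * ∑ i, x i k := by
  simp [empMean]

lemma sum_eq_mul_mean' (hM : (M : ℝ) ≠ 0) (x : Fin M → Fin n → ℝ) (k : Fin n) :
    ∑ i, x i k = (M : ℝ) * empMean M n x k := by
  rw [empMean_apply']; field_simp

lemma sum_dev' (hM : (M : ℝ) ≠ 0) (x : Fin M → Fin n → ℝ) (k : Fin n) :
    ∑ i, (x i k - empMean M n x k) = 0 := by
  rw [Finset.sum_sub_distrib, sum_eq_mul_mean' hM, Finset.sum_const, Finset.card_univ,
    Fintype.card_fin, nsmul_eq_mul]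
  ring

/-- Sum over the ensemble of `⟨deviation, constant⟩` vanishes. -/
lemma sum_dev_const' (hM : (M : ℝ) ≠ 0) (x : Fin M → Fin n → ℝ) (c : Fin n → ℝ) :
    ∑ i, ∑ k, (x i k - empMean M n x k) * c k = 0 := by
  rw [Finset.sum_comm]
  simp_rw [← Finset.sum_mul]
  simp [sum_dev' hM]

lemma trace_mul_transpose_eq' (A B : Matrix (Fin n) (Fin n) ℝ) :
    (A * Bᵀ).trace = ∑ k, ∑ l, A k l * B k l := by
  simp [Matrix.trace, Matrix.mul_apply, Matrix.diag]

lemma empCov_transpose' (x : Fin M → Fin n → ℝ) :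
    (empCov M n x)ᵀ = empCov M n x := by
  ext k l
  simp only [Matrix.transpose_apply, empCov, Matrix.of_apply]
  congr 1
  exact Finset.sum_congr rfl fun i _ => mul_comm _ _

/-- Quadratic form identity: `∑ᵢ ⟨eᵢ, A eᵢ⟩ = (M-1) tr(A Pᵀ)`. -/
lemma sum_quad' (hM1 : ((M : ℝ) - 1) ≠ 0) (x : Fin M → Fin n → ℝ)
    (A : Matrix (Fin n) (Fin n) ℝ) :
    ∑ i, ∑ k, (x i k - empMean M n x k) * (∑ l, A k l * (x i l - empMean M n x l))
      = ((M : ℝ) - 1) * (A * (empCov M n x)ᵀ).trace := by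
  rw [trace_mul_transpose_eq']
  have h : ∀ k l : Fin n,
      ∑ i, (x i k - empMean M n x k) * (x i l - empMean M n x l)
        = ((M : ℝ) - 1) * empCov M n x k l := by
    intro k l
    simp only [empCov, Matrix.of_apply]
    field_simp
  calc ∑ i, ∑ k, (x i k - empMean M n x k) * (∑ l, A k l * (x i l - empMean M n x l))
      = ∑ i, ∑ k, ∑ l, A k l *
          ((x i k - empMean M n x k) * (x i l - empMean M n x l)) := by
        refine Finset.sum_congr rfl fun i _ => Finset.sum_congr rfl fun k _ => ?_
        rw [Finset.mul_sum]
        exact Finset.sum_congr rfl fun l _ => by ring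
    _ = ∑ k, ∑ l, A k l *
          ∑ i, (x i k - empMean M n x k) * (x i l - empMean M n x l) := by
        rw [Finset.sum_comm]
        refine Finset.sum_congr rfl fun k _ => ?_
        rw [Finset.sum_comm]
        exact Finset.sum_congr rfl fun l _ => (Finset.mul_sum _ _ _).symm
    _ = ((M : ℝ) - 1) * ∑ k, ∑ l, A k l * empCov M n x k l := by
        rw [Finset.mul_sum]
        refine Finset.sum_congr rfl fun k _ => ?_
        rw [Finset.mul_sum]
        exact Finset.sum_congr rfl fun l _ => by rw [h k l]; ring

end Aux

/-- Energy identity (12)–(14) for the fully observed ensemble Kalman–Bucy filter: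
`(1/2) V′(t) = (1/(M−1)) Σᵢ ⟨Xⁱ − x̄, f(Xⁱ) − f(x̄)⟩ + tr(D) − (1/2)‖R^{−1/2} P‖_F²`,
where `R^{−1/2}` is the inverse of the positive definite square root of `R`. -/
theorem enkbf_energy_identity {n M : ℕ} (hM : 2 ≤ M) (T : ℝ) (hT : 0 < T)
    (f : (Fin n → ℝ) → Fin n → ℝ) (D : Matrix (Fin n) (Fin n) ℝ)
    (R : Matrix (Fin n) (Fin n) ℝ) (hR : R.PosDef)
    (y y' : ℝ → Fin n → ℝ)
    (hy : ∀ t ∈ Set.Icc (0 : ℝ) T, HasDerivAt y (y' t) t)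
    (X : Fin M → ℝ → Fin n → ℝ)
    (hPinv : ∀ t ∈ Set.Icc (0 : ℝ) T, IsUnit (empCov M n (fun i => X i t)))
    (hX : ∀ i, ∀ t ∈ Set.Icc (0 : ℝ) T,
      HasDerivAt (X i)
        (f (X i t) +
          (D * (empCov M n (fun j => X j t))⁻¹).mulVec
            (X i t - empMean M n (fun j => X j t)) -
          (1 / 2 : ℝ) •
            ((empCov M n (fun j => X j t)) * R⁻¹).mulVec
              (X i t + empMean M n (fun j => X j t) - (2 : ℝ) • y' t)) t) :
    ∀ t ∈ Set.Icc (0 : ℝ) T,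
      HasDerivAt (fun s => spread M n (fun i => X i s))
        (2 * (((M : ℝ) - 1)⁻¹ *
            (∑ i, eip (X i t - empMean M n (fun j => X j t))
              (f (X i t) - f (empMean M n (fun j => X j t)))) +
          D.trace -
          (1 / 2) *
            (frobNorm ((hR.posSemidef.sqrt)⁻¹ * empCov M n (fun i => X i t))) ^ 2)) t := by
  intro t ht
  have hM2 : (2 : ℝ) ≤ (M : ℝ) := by exact_mod_cast hM
  have hM0 : (M : ℝ) ≠ 0 := by linarith
  have hM1 : ((M : ℝ) - 1) ≠ 0 := by linarith
  set x : Fin M → Fin n → ℝ := fun i => X i t with hxdef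
  set m : Fin n → ℝ := empMean M n x with hmdef
  set P : Matrix (Fin n) (Fin n) ℝ := empCov M n x with hPdef
  set S : Matrix (Fin n) (Fin n) ℝ := hR.posSemidef.sqrt with hSdef
  set v : Fin M → Fin n → ℝ := fun i =>
    f (x i) + (D * P⁻¹).mulVec (x i - m) -
      (1 / 2 : ℝ) • ((P * R⁻¹).mulVec (x i + m - (2 : ℝ) • y' t)) with hvdef
  -- component derivatives
  have hv' : ∀ i k, HasDerivAt (fun s => X i s k) (v i k) t := by
    intro i k
    exact hasDerivAt_pi.mp (hX i t ht) k
  have hmean : ∀ k, HasDerivAt (fun s => (M : ℝ)⁻¹ * ∑ j, X j s k)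
      ((M : ℝ)⁻¹ * ∑ j, v j k) t := fun k =>
    (HasDerivAt.fun_sum fun j _ => hv' j k).const_mul _
  have hg : ∀ i k, HasDerivAt (fun s => X i s k - (M : ℝ)⁻¹ * ∑ j, X j s k)
      (v i k - (M : ℝ)⁻¹ * ∑ j, v j k) t := fun i k => (hv' i k).sub (hmean k)
  have hsq : ∀ i k, HasDerivAt (fun s => (X i s k - (M : ℝ)⁻¹ * ∑ j, X j s k) ^ 2)
      (2 * (x i k - m k) * (v i k - (M : ℝ)⁻¹ * ∑ j, v j k)) t := by
    intro i k
    have h2 : X i t k - (M : ℝ)⁻¹ * ∑ j, X j t k = x i k - m k := by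
      rw [hmdef, empMean_apply']
    simpa [h2] using (hg i k).fun_pow 2
  have hbig : HasDerivAt
      (fun s => ((M : ℝ) - 1)⁻¹ * ∑ i, ∑ k, (X i s k - (M : ℝ)⁻¹ * ∑ j, X j s k) ^ 2)
      (((M : ℝ) - 1)⁻¹ *
        ∑ i, ∑ k, 2 * (x i k - m k) * (v i k - (M : ℝ)⁻¹ * ∑ j, v j k)) t :=
    (HasDerivAt.fun_sum fun i _ => HasDerivAt.fun_sum fun k _ => hsq i k).const_mul _
  have hfun : (fun s => spread M n (fun i => X i s)) =
      (fun s => ((M : ℝ) - 1)⁻¹ * ∑ i, ∑ k, (X i s k - (M : ℝ)⁻¹ * ∑ j, X j s k) ^ 2) := by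
    funext s
    simp [spread, sqNorm, empMean_apply']
  rw [hfun]
  -- it remains to identify the derivative value
  convert hbig using 1
  -- drop the mean part of the derivative, since deviations sum to zero
  have step1 : ∑ i, ∑ k, 2 * (x i k - m k) * (v i k - (M : ℝ)⁻¹ * ∑ j, v j k)
      = 2 * ∑ i, ∑ k, (x i k - m k) * v i k := by
    have hz : ∑ i, ∑ k, (x i k - m k) * ((M : ℝ)⁻¹ * ∑ j, v j k) = 0 :=
      sum_dev_const' hM0 x _
    calc ∑ i, ∑ k, 2 * (x i k - m k) * (v i k - (M : ℝ)⁻¹ * ∑ j, v j k)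
        = ∑ i, ∑ k, (2 * ((x i k - m k) * v i k)
            - 2 * ((x i k - m k) * ((M : ℝ)⁻¹ * ∑ j, v j k))) :=
          Finset.sum_congr rfl fun i _ => Finset.sum_congr rfl fun k _ => by ring
      _ = 2 * ∑ i, ∑ k, (x i k - m k) * v i k
          - 2 * ∑ i, ∑ k, (x i k - m k) * ((M : ℝ)⁻¹ * ∑ j, v j k) := by
          simp_rw [Finset.sum_sub_distrib, ← Finset.mul_sum]
      _ = 2 * ∑ i, ∑ k, (x i k - m k) * v i k := by rw [hz]; ring
  -- expand `v` and split the double sum into three pieces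
  have step2 : ∑ i, ∑ k, (x i k - m k) * v i k
      = (∑ i, eip (x i - m) (f (x i) - f m))
        + ((M : ℝ) - 1) * ((D * P⁻¹) * Pᵀ).trace
        - (1 / 2) * (((M : ℝ) - 1) * ((P * R⁻¹) * Pᵀ).trace) := by
    have hv_apply : ∀ i k, v i k
        = f (x i) k + (∑ l, (D * P⁻¹) k l * (x i l - m l))
          - (1 / 2) * ((∑ l, (P * R⁻¹) k l * (x i l - m l))
            + (∑ l, (P * R⁻¹) k l * (2 * m l - 2 * y' t l))) := by
      intro i k
      simp only [hvdef, Pi.add_apply, Pi.sub_apply, Pi.smul_apply, smul_eq_mul,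
        Matrix.mulVec, dotProduct]
      have hsp : ∀ l, (P * R⁻¹) k l * (x i l + m l - 2 * y' t l)
          = (P * R⁻¹) k l * (x i l - m l) + (P * R⁻¹) k l * (2 * m l - 2 * y' t l) :=
        fun l => by ring
      simp_rw [hsp, Finset.sum_add_distrib]
    have hsplit : ∑ i, ∑ k, (x i k - m k) * v i k
        = (∑ i, ∑ k, (x i k - m k) * f (x i) k)
          + (∑ i, ∑ k, (x i k - m k) * (∑ l, (D * P⁻¹) k l * (x i l - m l)))
          - (1 / 2) * ((∑ i, ∑ k, (x i k - m k) * (∑ l, (P * R⁻¹) k l * (x i l - m l)))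
            + (∑ i, ∑ k, (x i k - m k) * (∑ l, (P * R⁻¹) k l * (2 * m l - 2 * y' t l)))) := by
      simp_rw [hv_apply]
      calc ∑ i, ∑ k, (x i k - m k) * (f (x i) k + (∑ l, (D * P⁻¹) k l * (x i l - m l))
            - (1 / 2) * ((∑ l, (P * R⁻¹) k l * (x i l - m l))
              + (∑ l, (P * R⁻¹) k l * (2 * m l - 2 * y' t l))))
          = ∑ i, ∑ k, ((x i k - m k) * f (x i) k
              + (x i k - m k) * (∑ l, (D * P⁻¹) k l * (x i l - m l))
              - ((1 / 2) * ((x i k - m k) * (∑ l, (P * R⁻¹) k l * (x i l - m l)))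
                + (1 / 2) * ((x i k - m k) * (∑ l, (P * R⁻¹) k l * (2 * m l - 2 * y' t l))))) :=
            Finset.sum_congr rfl fun i _ => Finset.sum_congr rfl fun k _ => by ring
        _ = _ := by
            simp_rw [Finset.sum_sub_distrib, Finset.sum_add_distrib, ← Finset.mul_sum]
            ring
    rw [hsplit]
    have hz1 : ∑ i, ∑ k, (x i k - m k) * (∑ l, (P * R⁻¹) k l * (2 * m l - 2 * y' t l)) = 0 :=
      sum_dev_const' hM0 x _
    have hz2 : ∑ i, ∑ k, (x i k - m k) * f m k = 0 := sum_dev_const' hM0 x _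
    have hf : ∑ i, ∑ k, (x i k - m k) * f (x i) k
        = ∑ i, eip (x i - m) (f (x i) - f m) := by
      have : ∑ i, eip (x i - m) (f (x i) - f m)
          = ∑ i, ∑ k, ((x i k - m k) * f (x i) k - (x i k - m k) * f m k) := by
        refine Finset.sum_congr rfl fun i _ => ?_
        simp only [eip, Pi.sub_apply]
        exact Finset.sum_congr rfl fun k _ => by ring
      rw [this]
      simp_rw [Finset.sum_sub_distrib]
      rw [hz2, sub_zero]
    rw [hz1, add_zero, hf, sum_quad' hM1 x (D * P⁻¹), sum_quad' hM1 x (P * R⁻¹)]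
  -- trace identities
  have hPunit : IsUnit P.det := (Matrix.isUnit_iff_isUnit_det P).mp (hPinv t ht)
  have hPT : Pᵀ = P := empCov_transpose' x
  have htr1 : ((D * P⁻¹) * Pᵀ).trace = D.trace := by
    rw [hPT, Matrix.mul_assoc, Matrix.nonsing_inv_mul P hPunit, Matrix.mul_one]
  have hST : Sᵀ = S := by
    have h1 : Sᴴ = S := hR.posSemidef.sqrt_conjTranspose'
    rwa [Matrix.conjTranspose_eq_transpose_of_trivial] at h1
  have htr2 : ((P * R⁻¹) * Pᵀ).trace = (frobNorm (S⁻¹ * P)) ^ 2 := by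
    have hfr : (frobNorm (S⁻¹ * P)) ^ 2 = ((S⁻¹ * P) * (S⁻¹ * P)ᵀ).trace := by
      rw [frobNorm, Real.sq_sqrt (by positivity), trace_mul_transpose_eq']
      exact Finset.sum_congr rfl fun i _ => Finset.sum_congr rfl fun j _ => pow_two _
    have hRinv : R⁻¹ = S⁻¹ * S⁻¹ := by
      conv_lhs => rw [← hR.posSemidef.sqrt_mul_self']
      rw [Matrix.mul_inv_rev]
    have hT2 : (S⁻¹ * P)ᵀ = P * S⁻¹ := by
      rw [Matrix.transpose_mul, hPT, Matrix.transpose_nonsing_inv, hST]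
    have hkey : ((S⁻¹ * P) * (P * S⁻¹)).trace = ((P * R⁻¹) * Pᵀ).trace := by
      rw [hPT, Matrix.trace_mul_comm (S⁻¹ * P) (P * S⁻¹), hRinv]
      congr 1
      simp only [Matrix.mul_assoc]
    rw [hfr, hT2, hkey]
  rw [step1, step2, htr1, htr2]
  field_simp
  ring

end
end
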